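/- arXiv:0902.3624 — 8 statements merged into one kernel-verified Lean document; each statement's English description precedes it below -/
import Mathlib

section
/- Let u, v be smooth functions of (x,y) satisfying the A_2 Toda system u_{xy} = exp(2u - v), v_{xy} = exp(-u + 2v). Then w^1 = u_{xx} + v_{xx} - u_x^2 + u_x v_x - v_x^2 satisfies ∂w^1/∂y = 0. -/
open Real

lemma hasDerivAt_slice_x (F : ℝ × ℝ → ℝ) (x y : ℝ) (hF : DifferentiableAt ℝ F (x, y)) :
    HasDerivAt (fun s => F (s, y)) (fderiv ℝ F (x, y) (1, 0)) x :=
  hF.hasFDerivAt.comp_hasDerivAt x ((hasDerivAt_id x).prodMk (hasDerivAt_const x y))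

lemma hasDerivAt_slice_y (F : ℝ × ℝ → ℝ) (x y : ℝ) (hF : DifferentiableAt ℝ F (x, y)) :
    HasDerivAt (fun t => F (x, t)) (fderiv ℝ F (x, y) (0, 1)) y :=
  hF.hasFDerivAt.comp_hasDerivAt y ((hasDerivAt_const y x).prodMk (hasDerivAt_id y))

lemma contDiff_pderiv (F : ℝ × ℝ → ℝ) (hF : ContDiff ℝ (⊤ : ℕ∞) F) (w : ℝ × ℝ) :
    ContDiff ℝ (⊤ : ℕ∞) (fun p => fderiv ℝ F p w) :=
  (hF.fderiv_right (by simp)).clm_apply contDiff_const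

lemma swap_mixed (F : ℝ × ℝ → ℝ) (hF : ContDiff ℝ (⊤ : ℕ∞) F) (q : ℝ × ℝ) (w w' : ℝ × ℝ) :
    fderiv ℝ (fun p => fderiv ℝ F p w) q w' = fderiv ℝ (fun p => fderiv ℝ F p w') q w := by
  have hd : Differentiable ℝ (fderiv ℝ F) := (hF.fderiv_right (m := (⊤ : ℕ∞)) (by simp)).differentiable (by simp)
  have key : ∀ a b : ℝ × ℝ, fderiv ℝ (fun p => fderiv ℝ F p a) q b
      = fderiv ℝ (fderiv ℝ F) q b a := by
    intro a b
    rw [fderiv_clm_apply (hd q) (differentiableAt_const a)]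
    simp
  rw [key, key]
  exact second_derivative_symmetric (fun p => (hF.differentiable (by simp) p).hasFDerivAt)
    (hd q).hasFDerivAt w' w

/-- For smooth solutions of the A₂ Toda system `u_{xy} = exp (2u - v)`,
`v_{xy} = exp (-u + 2v)`, the function
`w¹ = u_{xx} + v_{xx} - u_x² + u_x v_x - v_x²` satisfies `∂w¹/∂y = 0`. -/
theorem stmt_1 (u v w1 : ℝ → ℝ → ℝ)
    (hu : ContDiff ℝ (⊤ : ℕ∞) (Function.uncurry u))
    (hv : ContDiff ℝ (⊤ : ℕ∞) (Function.uncurry v))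
    (hequ : ∀ x y : ℝ, deriv (fun t => deriv (fun s => u s t) x) y
      = Real.exp (2 * u x y - v x y))
    (heqv : ∀ x y : ℝ, deriv (fun t => deriv (fun s => v s t) x) y
      = Real.exp (-u x y + 2 * v x y))
    (hw1 : ∀ x y : ℝ, w1 x y =
      iteratedDeriv 2 (fun s => u s y) x + iteratedDeriv 2 (fun s => v s y) x
        - (deriv (fun s => u s y) x) ^ 2
        + deriv (fun s => u s y) x * deriv (fun s => v s y) x
        - (deriv (fun s => v s y) x) ^ 2) :
    ∀ x y : ℝ, deriv (fun t => w1 x t) y = 0 := by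
  set U : ℝ × ℝ → ℝ := Function.uncurry u with hUdef
  set V : ℝ × ℝ → ℝ := Function.uncurry v with hVdef
  set Pu : ℝ × ℝ → ℝ := fun p => fderiv ℝ U p (1, 0) with hPudef
  set Pv : ℝ × ℝ → ℝ := fun p => fderiv ℝ V p (1, 0) with hPvdef
  set Qu : ℝ × ℝ → ℝ := fun p => fderiv ℝ Pu p (1, 0) with hQudef
  set Qv : ℝ × ℝ → ℝ := fun p => fderiv ℝ Pv p (1, 0) with hQvdef
  have hPus : ContDiff ℝ (⊤ : ℕ∞) Pu := contDiff_pderiv U hu (1, 0)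
  have hPvs : ContDiff ℝ (⊤ : ℕ∞) Pv := contDiff_pderiv V hv (1, 0)
  have hQus : ContDiff ℝ (⊤ : ℕ∞) Qu := contDiff_pderiv Pu hPus (1, 0)
  have hQvs : ContDiff ℝ (⊤ : ℕ∞) Qv := contDiff_pderiv Pv hPvs (1, 0)
  -- first x-derivatives
  have du : ∀ a b : ℝ, HasDerivAt (fun s => u s b) (Pu (a, b)) a := fun a b =>
    hasDerivAt_slice_x U a b ((hu.differentiable (by simp)) (a, b))
  have dv : ∀ a b : ℝ, HasDerivAt (fun s => v s b) (Pv (a, b)) a := fun a b =>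
    hasDerivAt_slice_x V a b ((hv.differentiable (by simp)) (a, b))
  have f1u : ∀ a b : ℝ, deriv (fun s => u s b) a = Pu (a, b) := fun a b => (du a b).deriv
  have f1v : ∀ a b : ℝ, deriv (fun s => v s b) a = Pv (a, b) := fun a b => (dv a b).deriv
  -- second x-derivatives
  have f2u : ∀ a b : ℝ, iteratedDeriv 2 (fun s => u s b) a = Qu (a, b) := by
    intro a b
    rw [iteratedDeriv_succ, iteratedDeriv_one]
    have h : deriv (fun s => u s b) = fun s => Pu (s, b) := funext fun s => f1u s b
    rw [h]
    exact (hasDerivAt_slice_x Pu a b ((hPus.differentiable (by simp)) (a, b))).deriv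
  have f2v : ∀ a b : ℝ, iteratedDeriv 2 (fun s => v s b) a = Qv (a, b) := by
    intro a b
    rw [iteratedDeriv_succ, iteratedDeriv_one]
    have h : deriv (fun s => v s b) = fun s => Pv (s, b) := funext fun s => f1v s b
    rw [h]
    exact (hasDerivAt_slice_x Pv a b ((hPvs.differentiable (by simp)) (a, b))).deriv
  -- mixed derivative values from the Toda system
  have f3u : ∀ a b : ℝ, fderiv ℝ Pu (a, b) (0, 1) = Real.exp (2 * u a b - v a b) := by
    intro a b
    have h1 := (hasDerivAt_slice_y Pu a b ((hPus.differentiable (by simp)) (a, b))).deriv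
    rw [← h1]
    have h2 : (fun t => Pu (a, t)) = fun t => deriv (fun s => u s t) a :=
      funext fun t => (f1u a t).symm
    rw [h2, hequ a b]
  have f3v : ∀ a b : ℝ, fderiv ℝ Pv (a, b) (0, 1) = Real.exp (-u a b + 2 * v a b) := by
    intro a b
    have h1 := (hasDerivAt_slice_y Pv a b ((hPvs.differentiable (by simp)) (a, b))).deriv
    rw [← h1]
    have h2 : (fun t => Pv (a, t)) = fun t => deriv (fun s => v s t) a :=
      funext fun t => (f1v a t).symm
    rw [h2, heqv a b]
  -- third-order mixed derivatives
  have f4u : ∀ a b : ℝ, fderiv ℝ Qu (a, b) (0, 1)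
      = Real.exp (2 * u a b - v a b) * (2 * Pu (a, b) - Pv (a, b)) := by
    intro a b
    have hsw := swap_mixed Pu hPus (a, b) (1, 0) (0, 1)
    have hslice := (hasDerivAt_slice_x (fun p => fderiv ℝ Pu p (0, 1)) a b
      (((contDiff_pderiv Pu hPus (0, 1)).differentiable (by simp)) (a, b))).deriv
    have heq : (fun s => fderiv ℝ Pu (s, b) (0, 1))
        = fun s => Real.exp (2 * u s b - v s b) := funext fun s => f3u s b
    have hder : HasDerivAt (fun s => Real.exp (2 * u s b - v s b))
        (Real.exp (2 * u a b - v a b) * (2 * Pu (a, b) - Pv (a, b))) a :=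
      (((du a b).const_mul 2).sub (dv a b)).exp
    rw [← hQudef] at hsw
    rw [hsw, ← hslice, heq, hder.deriv]
  have f4v : ∀ a b : ℝ, fderiv ℝ Qv (a, b) (0, 1)
      = Real.exp (-u a b + 2 * v a b) * (-Pu (a, b) + 2 * Pv (a, b)) := by
    intro a b
    have hsw := swap_mixed Pv hPvs (a, b) (1, 0) (0, 1)
    have hslice := (hasDerivAt_slice_x (fun p => fderiv ℝ Pv p (0, 1)) a b
      (((contDiff_pderiv Pv hPvs (0, 1)).differentiable (by simp)) (a, b))).deriv
    have heq : (fun s => fderiv ℝ Pv (s, b) (0, 1))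
        = fun s => Real.exp (-u s b + 2 * v s b) := funext fun s => f3v s b
    have hder : HasDerivAt (fun s => Real.exp (-u s b + 2 * v s b))
        (Real.exp (-u a b + 2 * v a b) * (-Pu (a, b) + 2 * Pv (a, b))) a :=
      ((du a b).neg.add ((dv a b).const_mul 2)).exp
    rw [← hQvdef] at hsw
    rw [hsw, ← hslice, heq, hder.deriv]
  -- final computation
  intro x y
  have hweq : (fun t => w1 x t) = fun t =>
      Qu (x, t) + Qv (x, t) - Pu (x, t) ^ 2 + Pu (x, t) * Pv (x, t) - Pv (x, t) ^ 2 := by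
    funext t
    rw [hw1 x t, f2u x t, f2v x t, f1u x t, f1v x t]
  rw [hweq]
  have dQu : HasDerivAt (fun t => Qu (x, t)) (fderiv ℝ Qu (x, y) (0, 1)) y :=
    hasDerivAt_slice_y Qu x y ((hQus.differentiable (by simp)) (x, y))
  have dQv : HasDerivAt (fun t => Qv (x, t)) (fderiv ℝ Qv (x, y) (0, 1)) y :=
    hasDerivAt_slice_y Qv x y ((hQvs.differentiable (by simp)) (x, y))
  have dPu : HasDerivAt (fun t => Pu (x, t)) (fderiv ℝ Pu (x, y) (0, 1)) y :=
    hasDerivAt_slice_y Pu x y ((hPus.differentiable (by simp)) (x, y))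
  have dPv : HasDerivAt (fun t => Pv (x, t)) (fderiv ℝ Pv (x, y) (0, 1)) y :=
    hasDerivAt_slice_y Pv x y ((hPvs.differentiable (by simp)) (x, y))
  have H := ((((dQu.add dQv).sub (dPu.pow 2)).add (dPu.mul dPv)).sub (dPv.pow 2))
  rw [(show HasDerivAt (fun t => Qu (x, t) + Qv (x, t) - Pu (x, t) ^ 2 + Pu (x, t) * Pv (x, t)
      - Pv (x, t) ^ 2) _ y from H).deriv, f4u x y, f4v x y, f3u x y, f3v x y]
  push_cast
  ring
end

section
/- Let u, v be smooth functions of (x,y) satisfying the A_2 Toda system u_{xy} = exp(2u - v), v_{xy} = exp(-u + 2v). Then w^2 = u_{xxx} - 2 u_x u_{xx} + u_x v_{xx} + u_x^2 v_x - u_x v_x^2 satisfies ∂w^2/∂y = 0. -/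
noncomputable def pd1 (f : ℝ × ℝ → ℝ) : ℝ × ℝ → ℝ := fun p => fderiv ℝ f p (1, 0)
noncomputable def pd2 (f : ℝ × ℝ → ℝ) : ℝ × ℝ → ℝ := fun p => fderiv ℝ f p (0, 1)

lemma pd1_contDiff {f : ℝ × ℝ → ℝ} (hf : ContDiff ℝ (⊤ : ℕ∞) f) : ContDiff ℝ (⊤ : ℕ∞) (pd1 f) :=
  (hf.fderiv_right (by simp)).clm_apply contDiff_const

lemma pd2_contDiff {f : ℝ × ℝ → ℝ} (hf : ContDiff ℝ (⊤ : ℕ∞) f) : ContDiff ℝ (⊤ : ℕ∞) (pd2 f) :=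
  (hf.fderiv_right (by simp)).clm_apply contDiff_const

lemma hasDerivAt_pd1 {f : ℝ × ℝ → ℝ} (hf : ContDiff ℝ (⊤ : ℕ∞) f) (x y : ℝ) :
    HasDerivAt (fun s => f (s, y)) (pd1 f (x, y)) x := by
  have h := (hf.differentiable (by simp) (x, y)).hasFDerivAt
  have hg : HasDerivAt (fun s : ℝ => (s, y)) (1, 0) x :=
    (hasDerivAt_id x).prodMk (hasDerivAt_const x y)
  exact h.comp_hasDerivAt x hg

lemma hasDerivAt_pd2 {f : ℝ × ℝ → ℝ} (hf : ContDiff ℝ (⊤ : ℕ∞) f) (x y : ℝ) :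
    HasDerivAt (fun t => f (x, t)) (pd2 f (x, y)) y := by
  have h := (hf.differentiable (by simp) (x, y)).hasFDerivAt
  have hg : HasDerivAt (fun t : ℝ => (x, t)) (0, 1) y :=
    (hasDerivAt_const y x).prodMk (hasDerivAt_id y)
  exact h.comp_hasDerivAt y hg

lemma pd2_pd1 {f : ℝ × ℝ → ℝ} (hf : ContDiff ℝ (⊤ : ℕ∞) f) : pd2 (pd1 f) = pd1 (pd2 f) := by
  funext p
  have hdf : ∀ q, HasFDerivAt f (fderiv ℝ f q) q := fun q =>
    (hf.differentiable (by simp) q).hasFDerivAt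
  have hd : DifferentiableAt ℝ (fderiv ℝ f) p :=
    (hf.fderiv_right (m := (⊤ : ℕ∞)) (by simp)).differentiable (by simp) p
  have h2 : HasFDerivAt (fderiv ℝ f) (fderiv ℝ (fderiv ℝ f) p) p := hd.hasFDerivAt
  have hsymm := second_derivative_symmetric hdf h2 (1,0) (0,1)
  have e1 : fderiv ℝ (fun q => fderiv ℝ f q (1,0)) p =
      ((fderiv ℝ (fderiv ℝ f) p).flip (1,0)) := by
    rw [fderiv_clm_apply hd (differentiableAt_const _)]
    simp
  have e2 : fderiv ℝ (fun q => fderiv ℝ f q (0,1)) p =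
      ((fderiv ℝ (fderiv ℝ f) p).flip (0,1)) := by
    rw [fderiv_clm_apply hd (differentiableAt_const _)]
    simp
  show fderiv ℝ (fun q => fderiv ℝ f q (1,0)) p (0,1) = fderiv ℝ (fun q => fderiv ℝ f q (0,1)) p (1,0)
  rw [e1, e2]
  simpa using hsymm.symm


/-- For smooth solutions of the A₂ Toda system `u_{xy} = exp (2u - v)`,
`v_{xy} = exp (-u + 2v)`, the function
`w² = u_{xxx} - 2 u_x u_{xx} + u_x v_{xx} + u_x² v_x - u_x v_x²`
satisfies `∂w²/∂y = 0`. -/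
theorem stmt_2 (u v w2 : ℝ → ℝ → ℝ)
    (hu : ContDiff ℝ (⊤ : ℕ∞) (Function.uncurry u))
    (hv : ContDiff ℝ (⊤ : ℕ∞) (Function.uncurry v))
    (hequ : ∀ x y : ℝ, deriv (fun t => deriv (fun s => u s t) x) y
      = Real.exp (2 * u x y - v x y))
    (heqv : ∀ x y : ℝ, deriv (fun t => deriv (fun s => v s t) x) y
      = Real.exp (-u x y + 2 * v x y))
    (hw2 : ∀ x y : ℝ, w2 x y =
      iteratedDeriv 3 (fun s => u s y) x
        - 2 * deriv (fun s => u s y) x * iteratedDeriv 2 (fun s => u s y) x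
        + deriv (fun s => u s y) x * iteratedDeriv 2 (fun s => v s y) x
        + (deriv (fun s => u s y) x) ^ 2 * deriv (fun s => v s y) x
        - deriv (fun s => u s y) x * (deriv (fun s => v s y) x) ^ 2) :
    ∀ x y : ℝ, deriv (fun t => w2 x t) y = 0 := by
  intro x y
  set U := Function.uncurry u with hUdef
  set V := Function.uncurry v with hVdef
  set E : ℝ × ℝ → ℝ := fun p => Real.exp (2 * U p - V p) with hEdef
  set F : ℝ × ℝ → ℝ := fun p => Real.exp (-U p + 2 * V p) with hFdef
  have hE : ContDiff ℝ (⊤ : ℕ∞) E := Real.contDiff_exp.comp ((contDiff_const.mul hu).sub hv)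
  have hF : ContDiff ℝ (⊤ : ℕ∞) F := Real.contDiff_exp.comp (hu.neg.add (contDiff_const.mul hv))
  have hu1 := pd1_contDiff hu
  have hu2 := pd1_contDiff hu1
  have hu3 := pd1_contDiff hu2
  have hv1 := pd1_contDiff hv
  have hv2 := pd1_contDiff hv1
  -- first x-derivatives as pd1
  have hd1u : ∀ a b : ℝ, deriv (fun s => u s b) a = pd1 U (a, b) := fun a b =>
    (show HasDerivAt (fun s => u s b) (pd1 U (a, b)) a from hasDerivAt_pd1 hu a b).deriv
  have hd1v : ∀ a b : ℝ, deriv (fun s => v s b) a = pd1 V (a, b) := fun a b =>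
    (show HasDerivAt (fun s => v s b) (pd1 V (a, b)) a from hasDerivAt_pd1 hv a b).deriv
  have hd2u : ∀ a b : ℝ, iteratedDeriv 2 (fun s => u s b) a = pd1 (pd1 U) (a, b) := by
    intro a b
    rw [iteratedDeriv_succ, iteratedDeriv_one]
    have h1 : deriv (fun s => u s b) = fun s => pd1 U (s, b) := funext fun s => hd1u s b
    rw [h1]
    exact (hasDerivAt_pd1 hu1 a b).deriv
  have hd2v : ∀ a b : ℝ, iteratedDeriv 2 (fun s => v s b) a = pd1 (pd1 V) (a, b) := by
    intro a b
    rw [iteratedDeriv_succ, iteratedDeriv_one]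
    have h1 : deriv (fun s => v s b) = fun s => pd1 V (s, b) := funext fun s => hd1v s b
    rw [h1]
    exact (hasDerivAt_pd1 hv1 a b).deriv
  have hd3u : ∀ a b : ℝ, iteratedDeriv 3 (fun s => u s b) a = pd1 (pd1 (pd1 U)) (a, b) := by
    intro a b
    rw [iteratedDeriv_succ]
    have h1 : iteratedDeriv 2 (fun s => u s b) = fun s => pd1 (pd1 U) (s, b) :=
      funext fun s => hd2u s b
    rw [h1]
    exact (hasDerivAt_pd1 hu2 a b).deriv
  -- the Toda equations as function identities
  have hEq : pd2 (pd1 U) = E := by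
    funext p
    obtain ⟨a, b⟩ := p
    have h1 : (fun t => pd1 U (a, t)) = fun t => deriv (fun s => u s t) a :=
      funext fun t => (hd1u a t).symm
    have h2 := (hasDerivAt_pd2 hu1 a b).deriv
    rw [h1] at h2
    rw [← h2, hequ a b]; rfl
  have hFq : pd2 (pd1 V) = F := by
    funext p
    obtain ⟨a, b⟩ := p
    have h1 : (fun t => pd1 V (a, t)) = fun t => deriv (fun s => v s t) a :=
      funext fun t => (hd1v a t).symm
    have h2 := (hasDerivAt_pd2 hv1 a b).deriv
    rw [h1] at h2
    rw [← h2, heqv a b]; rfl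
  -- Clairaut chains
  have c1 : pd2 (pd1 (pd1 U)) = pd1 E := by rw [pd2_pd1 hu1, hEq]
  have c1v : pd2 (pd1 (pd1 V)) = pd1 F := by rw [pd2_pd1 hv1, hFq]
  have c2 : pd2 (pd1 (pd1 (pd1 U))) = pd1 (pd1 E) := by
    rw [pd2_pd1 hu2]; exact congrArg pd1 c1
  -- explicit one-variable derivatives of E and F in x
  have hEexp : ∀ a b : ℝ, HasDerivAt (fun s => E (s, b))
      ((2 * pd1 U (a, b) - pd1 V (a, b)) * E (a, b)) a := by
    intro a b
    have hu' := hasDerivAt_pd1 hu a b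
    have hv' := hasDerivAt_pd1 hv a b
    have h := ((hu'.const_mul 2).sub hv').exp
    convert h using 1
    · rfl
    · exact mul_comm _ _
  have hFexp : ∀ a b : ℝ, HasDerivAt (fun s => F (s, b))
      ((-pd1 U (a, b) + 2 * pd1 V (a, b)) * F (a, b)) a := by
    intro a b
    have hu' := hasDerivAt_pd1 hu a b
    have hv' := hasDerivAt_pd1 hv a b
    have h := (hu'.neg.add (hv'.const_mul 2)).exp
    convert h using 1
    · rfl
    · exact mul_comm _ _
  have hE1 : ∀ a b : ℝ, pd1 E (a, b) = (2 * pd1 U (a, b) - pd1 V (a, b)) * E (a, b) :=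
    fun a b => (hasDerivAt_pd1 hE a b).unique (hEexp a b)
  have hF1 : ∀ a b : ℝ, pd1 F (a, b) = (-pd1 U (a, b) + 2 * pd1 V (a, b)) * F (a, b) :=
    fun a b => (hasDerivAt_pd1 hF a b).unique (hFexp a b)
  have hE2 : ∀ a b : ℝ, pd1 (pd1 E) (a, b) =
      (2 * pd1 (pd1 U) (a, b) - pd1 (pd1 V) (a, b)) * E (a, b)
        + (2 * pd1 U (a, b) - pd1 V (a, b)) * ((2 * pd1 U (a, b) - pd1 V (a, b)) * E (a, b)) := by
    intro a b
    have h1 := hasDerivAt_pd1 (pd1_contDiff hE) a b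
    have heq : (fun s => pd1 E (s, b)) =
        fun s => (2 * pd1 U (s, b) - pd1 V (s, b)) * E (s, b) := funext fun s => hE1 s b
    have h2 : HasDerivAt (fun s => pd1 E (s, b))
        ((2 * pd1 (pd1 U) (a, b) - pd1 (pd1 V) (a, b)) * E (a, b)
          + (2 * pd1 U (a, b) - pd1 V (a, b)) * ((2 * pd1 U (a, b) - pd1 V (a, b)) * E (a, b))) a := by
      rw [heq]
      exact (((hasDerivAt_pd1 hu1 a b).const_mul 2).sub (hasDerivAt_pd1 hv1 a b)).mul (hEexp a b)
    exact h1.unique h2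
  -- y-derivatives of the pd1-towers at (x, ·)
  have hA : HasDerivAt (fun t => pd1 U (x, t)) (E (x, y)) y := by
    have h := hasDerivAt_pd2 hu1 x y
    rwa [show pd2 (pd1 U) (x, y) = E (x, y) from congrFun hEq (x, y)] at h
  have hB : HasDerivAt (fun t => pd1 V (x, t)) (F (x, y)) y := by
    have h := hasDerivAt_pd2 hv1 x y
    rwa [show pd2 (pd1 V) (x, y) = F (x, y) from congrFun hFq (x, y)] at h
  have hA2 : HasDerivAt (fun t => pd1 (pd1 U) (x, t))
      ((2 * pd1 U (x, y) - pd1 V (x, y)) * E (x, y)) y := by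
    have h := hasDerivAt_pd2 hu2 x y
    rwa [show pd2 (pd1 (pd1 U)) (x, y) = _ from (congrFun c1 (x, y)).trans (hE1 x y)] at h
  have hB2 : HasDerivAt (fun t => pd1 (pd1 V) (x, t))
      ((-pd1 U (x, y) + 2 * pd1 V (x, y)) * F (x, y)) y := by
    have h := hasDerivAt_pd2 hv2 x y
    rwa [show pd2 (pd1 (pd1 V)) (x, y) = _ from (congrFun c1v (x, y)).trans (hF1 x y)] at h
  have hA3 : HasDerivAt (fun t => pd1 (pd1 (pd1 U)) (x, t))
      ((2 * pd1 (pd1 U) (x, y) - pd1 (pd1 V) (x, y)) * E (x, y)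
        + (2 * pd1 U (x, y) - pd1 V (x, y)) * ((2 * pd1 U (x, y) - pd1 V (x, y)) * E (x, y))) y := by
    have h := hasDerivAt_pd2 hu3 x y
    rwa [show pd2 (pd1 (pd1 (pd1 U))) (x, y) = _ from (congrFun c2 (x, y)).trans (hE2 x y)] at h
  -- rewrite w2 as a function of t
  have hw : (fun t => w2 x t) = fun t =>
      pd1 (pd1 (pd1 U)) (x, t)
        - 2 * pd1 U (x, t) * pd1 (pd1 U) (x, t)
        + pd1 U (x, t) * pd1 (pd1 V) (x, t)
        + (pd1 U (x, t)) ^ 2 * pd1 V (x, t)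
        - pd1 U (x, t) * (pd1 V (x, t)) ^ 2 := by
    funext t
    rw [hw2 x t, hd1u x t, hd1v x t, hd2u x t, hd2v x t, hd3u x t]
  rw [hw]
  have htot := ((((hA3.sub ((hA.const_mul 2).mul hA2)).add (hA.mul hB2)).add
      ((hA.pow 2).mul hB)).sub (hA.mul (hB.pow 2)))
  refine htot.deriv.trans ?_
  simp only [Pi.pow_apply]
  norm_num
  ring
end

section
/- If u(x,t) is a smooth solution of the potential modified KdV equation u_t = -(1/2) u_{xxx} + (u_x)^3, then w := (u_x)^2 - u_{xx} satisfies the KdV equation w_t = -(1/2) w_{xxx} + 3 w w_x. -/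
open Function

private noncomputable def Dx (f : ℝ → ℝ → ℝ) : ℝ → ℝ → ℝ := fun x t => deriv (fun r => f r t) x
private noncomputable def Dt (f : ℝ → ℝ → ℝ) : ℝ → ℝ → ℝ := fun x t => deriv (fun s => f x s) t

private lemma sliceX_contDiff {f : ℝ → ℝ → ℝ} (hf : ContDiff ℝ (⊤ : ℕ∞) (uncurry f)) (t : ℝ) :
    ContDiff ℝ (⊤ : ℕ∞) (fun r => f r t) :=
  hf.comp (contDiff_id.prodMk contDiff_const)

private lemma sliceT_contDiff {f : ℝ → ℝ → ℝ} (hf : ContDiff ℝ (⊤ : ℕ∞) (uncurry f)) (x : ℝ) :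
    ContDiff ℝ (⊤ : ℕ∞) (fun s => f x s) :=
  hf.comp (contDiff_const.prodMk contDiff_id)

private lemma hasDerivAt_x {f : ℝ → ℝ → ℝ} (hf : ContDiff ℝ (⊤ : ℕ∞) (uncurry f)) (x t : ℝ) :
    HasDerivAt (fun r => f r t) (Dx f x t) x :=
  (((sliceX_contDiff hf t).differentiable (by simp)) x).hasDerivAt

private lemma hasDerivAt_t {f : ℝ → ℝ → ℝ} (hf : ContDiff ℝ (⊤ : ℕ∞) (uncurry f)) (x t : ℝ) :
    HasDerivAt (fun s => f x s) (Dt f x t) t :=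
  (((sliceT_contDiff hf x).differentiable (by simp)) t).hasDerivAt

private lemma hasDerivAt_slice_x_s3 {f : ℝ → ℝ → ℝ} (hf : ContDiff ℝ (⊤ : ℕ∞) (uncurry f)) (x t : ℝ) :
    HasDerivAt (fun r => f r t) (fderiv ℝ (uncurry f) (x, t) (1, 0)) x := by
  have h := ((hf.differentiable (by simp)) (x, t)).hasFDerivAt
  have hline : HasDerivAt (fun r : ℝ => (r, t)) ((1:ℝ), (0:ℝ)) x :=
    (hasDerivAt_id x).prodMk (hasDerivAt_const x t)
  exact h.comp_hasDerivAt x hline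

private lemma hasDerivAt_slice_t {f : ℝ → ℝ → ℝ} (hf : ContDiff ℝ (⊤ : ℕ∞) (uncurry f)) (x t : ℝ) :
    HasDerivAt (fun s => f x s) (fderiv ℝ (uncurry f) (x, t) (0, 1)) t := by
  have h := ((hf.differentiable (by simp)) (x, t)).hasFDerivAt
  have hline : HasDerivAt (fun s : ℝ => (x, s)) ((0:ℝ), (1:ℝ)) t :=
    (hasDerivAt_const t x).prodMk (hasDerivAt_id t)
  exact h.comp_hasDerivAt t hline

private lemma uncurry_Dx {f : ℝ → ℝ → ℝ} (hf : ContDiff ℝ (⊤ : ℕ∞) (uncurry f)) :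
    uncurry (Dx f) = fun p => fderiv ℝ (uncurry f) p (1, 0) := by
  funext p
  exact (hasDerivAt_slice_x_s3 hf p.1 p.2).deriv

private lemma uncurry_Dt {f : ℝ → ℝ → ℝ} (hf : ContDiff ℝ (⊤ : ℕ∞) (uncurry f)) :
    uncurry (Dt f) = fun p => fderiv ℝ (uncurry f) p (0, 1) := by
  funext p
  exact (hasDerivAt_slice_t hf p.1 p.2).deriv

private lemma Dx_contDiff {f : ℝ → ℝ → ℝ} (hf : ContDiff ℝ (⊤ : ℕ∞) (uncurry f)) :
    ContDiff ℝ (⊤ : ℕ∞) (uncurry (Dx f)) := by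
  rw [uncurry_Dx hf]
  exact (hf.fderiv_right (by simp)).clm_apply contDiff_const

private lemma Dt_contDiff {f : ℝ → ℝ → ℝ} (hf : ContDiff ℝ (⊤ : ℕ∞) (uncurry f)) :
    ContDiff ℝ (⊤ : ℕ∞) (uncurry (Dt f)) := by
  rw [uncurry_Dt hf]
  exact (hf.fderiv_right (by simp)).clm_apply contDiff_const

private lemma clairaut {f : ℝ → ℝ → ℝ} (hf : ContDiff ℝ (⊤ : ℕ∞) (uncurry f)) (x t : ℝ) :
    Dt (Dx f) x t = Dx (Dt f) x t := by
  set g := uncurry f with hg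
  have hg' : ContDiff ℝ (⊤ : ℕ∞) (fderiv ℝ g) := hf.fderiv_right (by simp)
  set g'' := fderiv ℝ (fderiv ℝ g) (x, t) with hg''
  have hfd : ∀ y, HasFDerivAt g (fderiv ℝ g y) y := fun y =>
    ((hf.differentiable (by simp)) y).hasFDerivAt
  have hfd2 : HasFDerivAt (fderiv ℝ g) g'' (x, t) :=
    ((hg'.differentiable (by simp)) (x, t)).hasFDerivAt
  have hsymm : ∀ v w : ℝ × ℝ, g'' v w = g'' w v :=
    second_derivative_symmetric hfd hfd2
  -- LHS
  have h1 : Dt (Dx f) x t = g'' (0, 1) (1, 0) := by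
    have hfun : (fun s => Dx f x s) = fun s => (fderiv ℝ g (x, s)) (1, 0) := by
      funext s; exact (hasDerivAt_slice_x_s3 hf x s).deriv
    have hline : HasDerivAt (fun s : ℝ => (x, s)) ((0:ℝ), (1:ℝ)) t :=
      (hasDerivAt_const t x).prodMk (hasDerivAt_id t)
    have happ : HasFDerivAt (fun p => (fderiv ℝ g p) (1, 0))
        ((ContinuousLinearMap.apply ℝ ℝ ((1:ℝ), (0:ℝ))).comp g'') (x, t) :=
      (ContinuousLinearMap.apply ℝ ℝ ((1:ℝ), (0:ℝ))).hasFDerivAt.comp (x, t) hfd2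
    have h2 : HasDerivAt (fun s => (fderiv ℝ g (x, s)) (1, 0))
        (((ContinuousLinearMap.apply ℝ ℝ ((1:ℝ), (0:ℝ))).comp g'') ((0:ℝ), (1:ℝ))) t :=
      happ.comp_hasDerivAt t hline
    show deriv (fun s => Dx f x s) t = _
    rw [hfun, h2.deriv]
    rfl
  have h3 : Dx (Dt f) x t = g'' (1, 0) (0, 1) := by
    have hfun : (fun r => Dt f r t) = fun r => (fderiv ℝ g (r, t)) (0, 1) := by
      funext r; exact (hasDerivAt_slice_t hf r t).deriv
    have hline : HasDerivAt (fun r : ℝ => (r, t)) ((1:ℝ), (0:ℝ)) x :=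
      (hasDerivAt_id x).prodMk (hasDerivAt_const x t)
    have happ : HasFDerivAt (fun p => (fderiv ℝ g p) (0, 1))
        ((ContinuousLinearMap.apply ℝ ℝ ((0:ℝ), (1:ℝ))).comp g'') (x, t) :=
      (ContinuousLinearMap.apply ℝ ℝ ((0:ℝ), (1:ℝ))).hasFDerivAt.comp (x, t) hfd2
    have h2 : HasDerivAt (fun r => (fderiv ℝ g (r, t)) (0, 1))
        (((ContinuousLinearMap.apply ℝ ℝ ((0:ℝ), (1:ℝ))).comp g'') ((1:ℝ), (0:ℝ))) x :=
      by have := happ.comp_hasDerivAt x hline; exact this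
    show deriv (fun r => Dt f r t) x = _
    rw [hfun, h2.deriv]
    rfl
  rw [h1, h3, hsymm]

private lemma key (u W : ℝ → ℝ → ℝ) (hu : ContDiff ℝ (⊤ : ℕ∞) (uncurry u))
    (heq : ∀ x t, Dt u x t = -(1/2) * Dx (Dx (Dx u)) x t + (Dx u x t) ^ 3)
    (hW : W = fun a b => (Dx u a b) ^ 2 - Dx (Dx u) a b) (x t : ℝ) :
    Dt W x t = -(1/2) * Dx (Dx (Dx W)) x t + 3 * W x t * Dx W x t := by
  have h1 : ContDiff ℝ (⊤ : ℕ∞) (uncurry (Dx u)) := Dx_contDiff hu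
  have h2 : ContDiff ℝ (⊤ : ℕ∞) (uncurry (Dx (Dx u))) := Dx_contDiff h1
  have h3 : ContDiff ℝ (⊤ : ℕ∞) (uncurry (Dx (Dx (Dx u)))) := Dx_contDiff h2
  have h4 : ContDiff ℝ (⊤ : ℕ∞) (uncurry (Dx (Dx (Dx (Dx u))))) := Dx_contDiff h3
  -- u_{1,t} = -(1/2) u4 + 3 u1^2 u2
  have hA : ∀ r s, Dt (Dx u) r s = -(1/2) * Dx (Dx (Dx (Dx u))) r s
      + 3 * ((Dx u r s) ^ 2 * Dx (Dx u) r s) := by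
    intro r s
    rw [clairaut hu r s]
    have hfun : (fun a => Dt u a s)
        = fun a => -(1/2) * Dx (Dx (Dx u)) a s + (Dx u a s) ^ 3 :=
      funext fun a => heq a s
    have hder : HasDerivAt (fun a => -(1/2) * Dx (Dx (Dx u)) a s + (Dx u a s) ^ 3)
        (-(1/2) * Dx (Dx (Dx (Dx u))) r s
          + ↑3 * (Dx u r s) ^ (3-1) * Dx (Dx u) r s) r :=
      (HasDerivAt.const_mul (-(1/2)) (hasDerivAt_x h3 r s)).add
        ((hasDerivAt_x h1 r s).pow 3)
    show deriv (fun a => Dt u a s) r = _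
    rw [hfun, hder.deriv]
    push_cast
    ring
  -- u_{2,t} = -(1/2) u5 + 6 u1 u2^2 + 3 u1^2 u3
  have hB : Dt (Dx (Dx u)) x t
      = -(1/2) * Dx (Dx (Dx (Dx (Dx u)))) x t
        + 3 * ((↑2 * Dx u x t ^ 1 * Dx (Dx u) x t) * Dx (Dx u) x t
          + Dx u x t ^ 2 * Dx (Dx (Dx u)) x t) := by
    rw [clairaut h1 x t]
    have hfun : (fun a => Dt (Dx u) a t)
        = fun a => -(1/2) * Dx (Dx (Dx (Dx u))) a t
            + 3 * ((Dx u a t) ^ 2 * Dx (Dx u) a t) :=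
      funext fun a => hA a t
    have hder : HasDerivAt (fun a => -(1/2) * Dx (Dx (Dx (Dx u))) a t
          + 3 * ((Dx u a t) ^ 2 * Dx (Dx u) a t))
        (-(1/2) * Dx (Dx (Dx (Dx (Dx u)))) x t
          + 3 * ((↑2 * Dx u x t ^ 1 * Dx (Dx u) x t) * Dx (Dx u) x t
            + Dx u x t ^ 2 * Dx (Dx (Dx u)) x t)) x :=
      (HasDerivAt.const_mul (-(1/2)) (hasDerivAt_x h4 x t)).add
        (HasDerivAt.const_mul 3
          (((hasDerivAt_x h1 x t).pow 2).mul (hasDerivAt_x h2 x t)))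
    show deriv (fun a => Dt (Dx u) a t) x = _
    rw [hfun, hder.deriv]
  -- W_x
  have hDxW : ∀ r s, Dx W r s
      = 2 * (Dx u r s * Dx (Dx u) r s) - Dx (Dx (Dx u)) r s := by
    intro r s
    simp only [hW]
    have hder : HasDerivAt (fun a => (Dx u a s) ^ 2 - Dx (Dx u) a s)
        (↑2 * Dx u r s ^ 1 * Dx (Dx u) r s - Dx (Dx (Dx u)) r s) r :=
      ((hasDerivAt_x h1 r s).pow 2).sub (hasDerivAt_x h2 r s)
    show deriv (fun a => (Dx u a s) ^ 2 - Dx (Dx u) a s) r = _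
    rw [hder.deriv]
    ring
  -- W_xx
  have hDxxW : ∀ r s, Dx (Dx W) r s
      = 2 * (Dx (Dx u) r s * Dx (Dx u) r s + Dx u r s * Dx (Dx (Dx u)) r s)
        - Dx (Dx (Dx (Dx u))) r s := by
    intro r s
    have hfun : (fun a => Dx W a s)
        = fun a => 2 * (Dx u a s * Dx (Dx u) a s) - Dx (Dx (Dx u)) a s :=
      funext fun a => hDxW a s
    have hder : HasDerivAt (fun a => 2 * (Dx u a s * Dx (Dx u) a s) - Dx (Dx (Dx u)) a s)
        (2 * (Dx (Dx u) r s * Dx (Dx u) r s + Dx u r s * Dx (Dx (Dx u)) r s)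
          - Dx (Dx (Dx (Dx u))) r s) r :=
      (HasDerivAt.const_mul 2
        ((hasDerivAt_x h1 r s).mul (hasDerivAt_x h2 r s))).sub (hasDerivAt_x h3 r s)
    show deriv (fun a => Dx W a s) r = _
    rw [hfun, hder.deriv]
  -- W_xxx
  have hDxxxW : Dx (Dx (Dx W)) x t
      = 2 * ((Dx (Dx (Dx u)) x t * Dx (Dx u) x t + Dx (Dx u) x t * Dx (Dx (Dx u)) x t)
          + (Dx (Dx u) x t * Dx (Dx (Dx u)) x t + Dx u x t * Dx (Dx (Dx (Dx u))) x t))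
        - Dx (Dx (Dx (Dx (Dx u)))) x t := by
    have hfun : (fun a => Dx (Dx W) a t)
        = fun a => 2 * (Dx (Dx u) a t * Dx (Dx u) a t + Dx u a t * Dx (Dx (Dx u)) a t)
            - Dx (Dx (Dx (Dx u))) a t :=
      funext fun a => hDxxW a t
    have hder : HasDerivAt
        (fun a => 2 * (Dx (Dx u) a t * Dx (Dx u) a t + Dx u a t * Dx (Dx (Dx u)) a t)
          - Dx (Dx (Dx (Dx u))) a t)
        (2 * ((Dx (Dx (Dx u)) x t * Dx (Dx u) x t + Dx (Dx u) x t * Dx (Dx (Dx u)) x t)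
            + (Dx (Dx u) x t * Dx (Dx (Dx u)) x t + Dx u x t * Dx (Dx (Dx (Dx u))) x t))
          - Dx (Dx (Dx (Dx (Dx u)))) x t) x :=
      (HasDerivAt.const_mul 2
        (((hasDerivAt_x h2 x t).mul (hasDerivAt_x h2 x t)).add
          ((hasDerivAt_x h1 x t).mul (hasDerivAt_x h3 x t)))).sub (hasDerivAt_x h4 x t)
    show deriv (fun a => Dx (Dx W) a t) x = _
    rw [hfun, hder.deriv]
  -- W_t
  have hDtW : Dt W x t
      = ↑2 * Dx u x t ^ 1 * Dt (Dx u) x t - Dt (Dx (Dx u)) x t := by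
    simp only [hW]
    have hder : HasDerivAt (fun s => (Dx u x s) ^ 2 - Dx (Dx u) x s)
        (↑2 * Dx u x t ^ 1 * Dt (Dx u) x t - Dt (Dx (Dx u)) x t) t :=
      ((hasDerivAt_t h1 x t).pow 2).sub (hasDerivAt_t h2 x t)
    show deriv (fun s => (Dx u x s) ^ 2 - Dx (Dx u) x s) t = _
    rw [hder.deriv]
  rw [hDtW, hA x t, hB, hDxxxW, hDxW x t, hW]
  push_cast
  ring

/-- If smooth `u(x,t)` solves the potential modified KdV equation
`u_t = -(1/2) u_{xxx} + u_x³`, then `w = u_x² - u_{xx}` solves the KdV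
equation `w_t = -(1/2) w_{xxx} + 3 w w_x`. -/
theorem stmt_3 (u w : ℝ → ℝ → ℝ)
    (hu : ContDiff ℝ (⊤ : ℕ∞) (Function.uncurry u))
    (heq : ∀ x t : ℝ, deriv (fun s => u x s) t =
      -(1/2) * iteratedDeriv 3 (fun r => u r t) x + (deriv (fun r => u r t) x) ^ 3)
    (hw : ∀ x t : ℝ, w x t =
      (deriv (fun r => u r t) x) ^ 2 - iteratedDeriv 2 (fun r => u r t) x) :
    ∀ x t : ℝ, deriv (fun s => w x s) t =
      -(1/2) * iteratedDeriv 3 (fun r => w r t) x + 3 * w x t * deriv (fun r => w r t) x := by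
  intro x t
  have hit2 : ∀ (f : ℝ → ℝ → ℝ) (r s : ℝ),
      iteratedDeriv 2 (fun b => f b s) r = Dx (Dx f) r s := by
    intro f r s
    simp only [iteratedDeriv_succ, iteratedDeriv_zero]
    rfl
  have hit3 : ∀ (f : ℝ → ℝ → ℝ) (r s : ℝ),
      iteratedDeriv 3 (fun b => f b s) r = Dx (Dx (Dx f)) r s := by
    intro f r s
    simp only [iteratedDeriv_succ, iteratedDeriv_zero]
    rfl
  have heq' : ∀ x t, Dt u x t = -(1/2) * Dx (Dx (Dx u)) x t + (Dx u x t) ^ 3 := by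
    intro a b
    rw [← hit3 u a b]
    exact heq a b
  have hw' : w = fun a b => (Dx u a b) ^ 2 - Dx (Dx u) a b := by
    funext a b
    rw [hw a b, hit2 u a b]; rfl
  have h3w : iteratedDeriv 3 (fun r => w r t) x = Dx (Dx (Dx w)) x t := hit3 w x t
  rw [h3w]
  exact key u w hu heq' hw' x t
end

section
/- Let u(x,y) be a smooth function satisfying u_{xy} = exp(2u)·sqrt(1 + 4ε²u_x²) for a real parameter ε. Then w̄ = u_{yy} - u_y² - ε²·exp(4u) satisfies ∂w̄/∂x = 0. -/
lemma slice1 {g : ℝ × ℝ → ℝ} {g' : ℝ × ℝ →L[ℝ] ℝ} {x y : ℝ} (h : HasFDerivAt g g' (x, y)) :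
    HasDerivAt (fun s => g (s, y)) (g' (1, 0)) x := by
  have := h.comp_hasDerivAt x ((hasDerivAt_id x).prodMk (hasDerivAt_const x y))
  simp at this
  exact this

lemma slice2 {g : ℝ × ℝ → ℝ} {g' : ℝ × ℝ →L[ℝ] ℝ} {x y : ℝ} (h : HasFDerivAt g g' (x, y)) :
    HasDerivAt (fun t => g (x, t)) (g' (0, 1)) y := by
  have := h.comp_hasDerivAt y ((hasDerivAt_const y x).prodMk (hasDerivAt_id y))
  exact this

lemma papply {g : ℝ × ℝ → ℝ} (hg : ContDiff ℝ (⊤ : ℕ∞) g) (v : ℝ × ℝ) (z : ℝ × ℝ) :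
    HasFDerivAt (fun w => fderiv ℝ g w v) ((fderiv ℝ (fderiv ℝ g) z).flip v) z := by
  have h1 : DifferentiableAt ℝ (fderiv ℝ g) z :=
    ((hg.fderiv_right (m := (⊤ : ℕ∞)) (by simp)).differentiable (by simp)).differentiableAt
  have := h1.hasFDerivAt.clm_apply (hasFDerivAt_const v z)
  simpa using this

/-- For ε ∈ ℝ and a smooth solution `u(x,y)` of the extended Liouville
equation `u_{xy} = e^{2u}·√(1 + 4ε²u_x²)`, the function
`w̄ = u_{yy} - u_y² - ε² e^{4u}` satisfies `∂w̄/∂x = 0`. -/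
theorem stmt_7 (ε : ℝ) (u wbar : ℝ → ℝ → ℝ)
    (hu : ContDiff ℝ (⊤ : ℕ∞) (Function.uncurry u))
    (heq : ∀ x y : ℝ, deriv (fun t => deriv (fun s => u s t) x) y =
      Real.exp (2 * u x y) * Real.sqrt (1 + 4 * ε ^ 2 * (deriv (fun s => u s y) x) ^ 2))
    (hwbar : ∀ x y : ℝ, wbar x y =
      iteratedDeriv 2 (fun t => u x t) y - (deriv (fun t => u x t) y) ^ 2
        - ε ^ 2 * Real.exp (4 * u x y)) :
    ∀ x y : ℝ, deriv (fun s => wbar s y) x = 0 := by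
  intro x y
  set U : ℝ × ℝ → ℝ := Function.uncurry u with hU
  have hUd : Differentiable ℝ U := hu.differentiable (by simp)
  set P : ℝ × ℝ → ℝ := fun z => fderiv ℝ U z (1, 0) with hPdef
  set Q : ℝ × ℝ → ℝ := fun z => fderiv ℝ U z (0, 1) with hQdef
  have hP : ContDiff ℝ (⊤ : ℕ∞) P := (hu.fderiv_right (by simp)).clm_apply contDiff_const
  have hQ : ContDiff ℝ (⊤ : ℕ∞) Q := (hu.fderiv_right (by simp)).clm_apply contDiff_const
  -- slice derivatives of U
  have hUx : ∀ a b : ℝ, HasDerivAt (fun s => u s b) (P (a, b)) a := fun a b =>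
    slice1 (hUd (a, b)).hasFDerivAt
  have hUy : ∀ a b : ℝ, HasDerivAt (fun t => u a t) (Q (a, b)) b := fun a b =>
    slice2 (hUd (a, b)).hasFDerivAt
  have f1 : ∀ a b : ℝ, deriv (fun s => u s b) a = P (a, b) := fun a b => (hUx a b).deriv
  have f2 : ∀ a b : ℝ, deriv (fun t => u a t) b = Q (a, b) := fun a b => (hUy a b).deriv
  -- symmetry of second derivatives
  have symU : ∀ z : ℝ × ℝ, fderiv ℝ (fderiv ℝ U) z (1, 0) (0, 1)
      = fderiv ℝ (fderiv ℝ U) z (0, 1) (1, 0) := fun z =>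
    (hu.contDiffAt.isSymmSndFDerivAt (by rw [minSmoothness_of_isRCLikeNormedField]; exact WithTop.coe_le_coe.mpr le_top)).eq _ _
  have symQ : ∀ z : ℝ × ℝ, fderiv ℝ (fderiv ℝ Q) z (1, 0) (0, 1)
      = fderiv ℝ (fderiv ℝ Q) z (0, 1) (1, 0) := fun z =>
    (hQ.contDiffAt.isSymmSndFDerivAt (by rw [minSmoothness_of_isRCLikeNormedField]; exact WithTop.coe_le_coe.mpr le_top)).eq _ _
  -- ∂₁ Q = ∂₂ P
  have hPQ : ∀ z : ℝ × ℝ, fderiv ℝ Q z (1, 0) = fderiv ℝ P z (0, 1) := by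
    intro z
    have h1 := (papply hu (0, 1) z).fderiv
    have h2 := (papply hu (1, 0) z).fderiv
    rw [show (fun w => fderiv ℝ U w (0,1)) = Q from rfl] at h1
    rw [show (fun w => fderiv ℝ U w (1,0)) = P from rfl] at h2
    rw [h1, h2]
    simpa using symU z
  -- rewrite the PDE: ∂₂ P = F
  have heq' : ∀ a b : ℝ, fderiv ℝ P (a, b) (0, 1)
      = Real.exp (2 * u a b) * Real.sqrt (1 + 4 * ε ^ 2 * (P (a, b)) ^ 2) := by
    intro a b
    have hfun : (fun t => deriv (fun s => u s t) a) = fun t => P (a, t) := by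
      funext t; exact f1 a t
    have hd := (slice2 ((hP.differentiable (by simp)) (a, b)).hasFDerivAt).deriv
    have := heq a b
    rw [hfun, f1 a b] at this
    rw [← hd]; exact this
  -- the PDE as a statement about (fun z => fderiv ℝ Q z (1,0))
  have hH : ∀ z : ℝ × ℝ, fderiv ℝ Q z (1, 0)
      = Real.exp (2 * U z) * Real.sqrt (1 + 4 * ε ^ 2 * (P z) ^ 2) := by
    intro z
    rw [hPQ z]
    exact heq' z.1 z.2
  -- wbar slice function
  have hwfun : (fun s => wbar s y) = fun s =>
      fderiv ℝ Q (s, y) (0, 1) - (Q (s, y)) ^ 2 - ε ^ 2 * Real.exp (4 * u s y) := by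
    funext s
    rw [hwbar s y, f2 s y]
    congr 1
    congr 1
    rw [iteratedDeriv_succ, iteratedDeriv_one]
    have : deriv (fun t => u s t) = fun t => Q (s, t) := funext fun t => f2 s t
    rw [this]
    exact (slice2 ((hQ.differentiable (by simp)) (s, y)).hasFDerivAt).deriv
  rw [hwfun]
  -- derivative of first term
  have A1 : HasDerivAt (fun s => fderiv ℝ Q (s, y) (0, 1))
      (fderiv ℝ (fderiv ℝ Q) (x, y) (1, 0) (0, 1)) x := by
    have := slice1 (papply hQ (0, 1) (x, y))
    simpa using this
  -- identify that derivative with ∂₂ of (fun z => fderiv Q z (1,0)) i.e. ∂₂ F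
  set sq : ℝ := Real.sqrt (1 + 4 * ε ^ 2 * (P (x, y)) ^ 2) with hsq
  have hpos : (0:ℝ) < 1 + 4 * ε ^ 2 * (P (x, y)) ^ 2 := by positivity
  have hsqpos : 0 < sq := Real.sqrt_pos.mpr hpos
  have hFval : fderiv ℝ P (x, y) (0, 1) = Real.exp (2 * u x y) * sq := heq' x y
  have key : fderiv ℝ (fderiv ℝ Q) (x, y) (1, 0) (0, 1)
      = 2 * Q (x, y) * (Real.exp (2 * u x y) * sq)
        + Real.exp (2 * u x y) * (4 * ε ^ 2 * P (x, y) * (Real.exp (2 * u x y) * sq) / sq) := by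
    rw [symQ (x, y)]
    -- LHS = deriv of t ↦ fderiv Q (x,t) (1,0) at y
    have B1 : HasDerivAt (fun t => fderiv ℝ Q (x, t) (1, 0))
        (fderiv ℝ (fderiv ℝ Q) (x, y) (0, 1) (1, 0)) y := by
      have := slice2 (papply hQ (1, 0) (x, y))
      simpa using this
    have hfun2 : (fun t => fderiv ℝ Q (x, t) (1, 0))
        = fun t => Real.exp (2 * u x t) * Real.sqrt (1 + 4 * ε ^ 2 * (P (x, t)) ^ 2) := by
      funext t; exact hH (x, t)
    rw [hfun2] at B1
    -- compute the same derivative by 1-d calculus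
    have hPy : HasDerivAt (fun t => P (x, t)) (Real.exp (2 * u x y) * sq) y := by
      have := slice2 ((hP.differentiable (by simp)) (x, y)).hasFDerivAt
      rwa [hFval] at this
    have hg : HasDerivAt (fun t => 1 + 4 * ε ^ 2 * (P (x, t)) ^ 2)
        (4 * ε ^ 2 * (2 * P (x, y) ^ 1 * (Real.exp (2 * u x y) * sq))) y :=
      ((hPy.pow 2).const_mul (4 * ε ^ 2)).const_add 1
    have hsqrt : HasDerivAt (fun t => Real.sqrt (1 + 4 * ε ^ 2 * (P (x, t)) ^ 2))
        (4 * ε ^ 2 * (2 * P (x, y) ^ 1 * (Real.exp (2 * u x y) * sq)) / (2 * sq)) y :=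
      hg.sqrt (ne_of_gt hpos)
    have hexp : HasDerivAt (fun t => Real.exp (2 * u x t))
        (Real.exp (2 * u x y) * (2 * Q (x, y))) y := by
      have := ((hUy x y).const_mul 2).exp
      simpa [mul_comm] using this
    have hprod := hexp.mul hsqrt
    have := B1.unique hprod
    rw [this]
    field_simp
    ring
  have A2 : HasDerivAt (fun s => (Q (s, y)) ^ 2)
      (2 * Q (x, y) * (Real.exp (2 * u x y) * sq)) x := by
    have h := (slice1 ((hQ.differentiable (by simp)) (x, y)).hasFDerivAt).pow 2
    have : fderiv ℝ Q (x, y) (1, 0) = Real.exp (2 * u x y) * sq := by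
      rw [hH (x, y)]; rfl
    rw [this] at h
    simp [mul_assoc] at h
    rw [mul_assoc]
    exact h
  have A3 : HasDerivAt (fun s => ε ^ 2 * Real.exp (4 * u s y))
      (ε ^ 2 * (Real.exp (4 * u x y) * (4 * P (x, y)))) x := by
    have := (((hUx x y).const_mul 4).exp).const_mul (ε ^ 2)
    simpa [mul_comm] using this
  have Atot : HasDerivAt (fun s => fderiv ℝ Q (s, y) (0, 1) - (Q (s, y)) ^ 2 - ε ^ 2 * Real.exp (4 * u s y)) _ x := (A1.sub A2).sub A3
  rw [Atot.deriv, key]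
  have hsq2 : sq * sq = 1 + 4 * ε ^ 2 * (P (x, y)) ^ 2 :=
    Real.mul_self_sqrt (le_of_lt hpos)
  have hexp2 : Real.exp (2 * u x y) * Real.exp (2 * u x y) = Real.exp (4 * u x y) := by
    rw [← Real.exp_add]; ring_nf
  rw [← hexp2]
  field_simp
  ring
end

section
/- Let u(x,y) be a smooth function satisfying u_{xy} = exp(2u)·sqrt(1+4ε²u_x²) for ε ∈ ℝ, and let U = u + (1/2)·arcsinh(2ε u_x). Then U satisfies the Liouville equation U_{xy} = exp(2U). -/
open Real

private lemma hasDerivAt_fst' {f : ℝ × ℝ → ℝ} (hf : ContDiff ℝ (⊤ : ℕ∞) f) (a b : ℝ) :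
    HasDerivAt (fun s => f (s, b)) (fderiv ℝ f (a, b) (1, 0)) a := by
  have h1 : HasDerivAt (fun s : ℝ => (s, b)) ((1:ℝ), (0:ℝ)) a :=
    (hasDerivAt_id a).prodMk (hasDerivAt_const a b)
  exact ((hf.differentiable (by simp) (a, b)).hasFDerivAt).comp_hasDerivAt a h1

private lemma hasDerivAt_snd' {f : ℝ × ℝ → ℝ} (hf : ContDiff ℝ (⊤ : ℕ∞) f) (a b : ℝ) :
    HasDerivAt (fun t => f (a, t)) (fderiv ℝ f (a, b) (0, 1)) b := by
  have h1 : HasDerivAt (fun t : ℝ => (a, t)) ((0:ℝ), (1:ℝ)) b :=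
    (hasDerivAt_const b a).prodMk (hasDerivAt_id b)
  exact ((hf.differentiable (by simp) (a, b)).hasFDerivAt).comp_hasDerivAt b h1

private lemma contDiff_pd {f : ℝ × ℝ → ℝ} (hf : ContDiff ℝ (⊤ : ℕ∞) f) (v : ℝ × ℝ) :
    ContDiff ℝ (⊤ : ℕ∞) (fun q => fderiv ℝ f q v) :=
  (ContinuousLinearMap.apply ℝ ℝ v).contDiff.comp (hf.fderiv_right (by simp))

private lemma pd_eval {g : ℝ × ℝ → ℝ} (hg : ContDiff ℝ (⊤ : ℕ∞) g) (r : ℝ × ℝ) (v w : ℝ × ℝ) :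
    fderiv ℝ (fun z => fderiv ℝ g z v) r w = fderiv ℝ (fderiv ℝ g) r w v := by
  have hd : DifferentiableAt ℝ (fderiv ℝ g) r :=
    ((hg.fderiv_right (m := 1) (WithTop.coe_le_coe.mpr le_top)).differentiable (by simp) r)
  have h1 : HasFDerivAt (fun z => fderiv ℝ g z v)
      ((ContinuousLinearMap.apply ℝ ℝ v).comp (fderiv ℝ (fderiv ℝ g) r)) r :=
    (ContinuousLinearMap.apply ℝ ℝ v).hasFDerivAt.comp r hd.hasFDerivAt
  rw [h1.fderiv]; rfl

private lemma swap_pd {g : ℝ × ℝ → ℝ} (hg : ContDiff ℝ (⊤ : ℕ∞) g) (r : ℝ × ℝ) (v w : ℝ × ℝ) :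
    fderiv ℝ (fun z => fderiv ℝ g z v) r w = fderiv ℝ (fun z => fderiv ℝ g z w) r v := by
  rw [pd_eval hg r v w, pd_eval hg r w v]
  exact (hg.contDiffAt.isSymmSndFDerivAt (by rw [minSmoothness_of_isRCLikeNormedField]; exact WithTop.coe_le_coe.mpr le_top)) w v

/-- If a smooth `u(x,y)` satisfies the extended Liouville equation
`u_{xy} = e^{2u}·√(1 + 4ε²u_x²)` and `U = u + (1/2)·arcsinh(2ε u_x)`, then
`U` satisfies the Liouville equation `U_{xy} = e^{2U}`. -/
theorem stmt_8 (ε : ℝ) (u U : ℝ → ℝ → ℝ)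
    (hu : ContDiff ℝ (⊤ : ℕ∞) (Function.uncurry u))
    (heq : ∀ x y : ℝ, deriv (fun t => deriv (fun s => u s t) x) y =
      Real.exp (2 * u x y) * Real.sqrt (1 + 4 * ε ^ 2 * (deriv (fun s => u s y) x) ^ 2))
    (hU : ∀ x y : ℝ, U x y = u x y + (1/2) * Real.arsinh (2 * ε * deriv (fun s => u s y) x)) :
    ∀ x y : ℝ, deriv (fun t => deriv (fun s => U s t) x) y = Real.exp (2 * U x y) := by
  intro x y
  set f : ℝ × ℝ → ℝ := Function.uncurry u with hf_def
  set g : ℝ × ℝ → ℝ := fun z => fderiv ℝ f z (1, 0) with hg_def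
  have hg : ContDiff ℝ (⊤ : ℕ∞) g := contDiff_pd hu _
  set p : ℝ → ℝ → ℝ := fun a b => g (a, b) with hp_def
  set q : ℝ → ℝ → ℝ := fun a b => fderiv ℝ g (a, b) (1, 0) with hq_def
  set S : ℝ → ℝ → ℝ := fun a b => Real.sqrt (1 + 4 * ε ^ 2 * (p a b) ^ 2) with hS_def
  set E : ℝ → ℝ → ℝ := fun a b => Real.exp (2 * u a b) with hE_def
  -- basic facts
  have hSpos : ∀ a b : ℝ, 0 < S a b := fun a b => Real.sqrt_pos.mpr (by positivity)
  have hSne : ∀ a b : ℝ, S a b ≠ 0 := fun a b => (hSpos a b).ne'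
  have hSsq : ∀ a b : ℝ, S a b ^ 2 = 1 + 4 * ε ^ 2 * (p a b) ^ 2 := fun a b =>
    Real.sq_sqrt (by positivity)
  -- u_x
  have hux : ∀ a b : ℝ, HasDerivAt (fun s => u s b) (p a b) a := fun a b =>
    hasDerivAt_fst' hu a b
  have hderiv_ux : ∀ a b : ℝ, deriv (fun s => u s b) a = p a b := fun a b => (hux a b).deriv
  -- u_xx
  have hpx : ∀ a b : ℝ, HasDerivAt (fun s => p s b) (q a b) a := fun a b =>
    hasDerivAt_fst' hg a b
  -- u_xy = E * S
  have hpy' : ∀ a b : ℝ, fderiv ℝ g (a, b) (0, 1) = E a b * S a b := by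
    intro a b
    have h1 : HasDerivAt (fun t => p a t) (fderiv ℝ g (a, b) (0, 1)) b := hasDerivAt_snd' hg a b
    have h2 := heq a b
    have h3 : (fun t => deriv (fun s => u s t) a) = fun t => p a t := by
      funext t; exact hderiv_ux a t
    rw [h3, h1.deriv, hderiv_ux a b] at h2
    exact h2
  have hpy : ∀ a b : ℝ, HasDerivAt (fun t => p a t) (E a b * S a b) b := by
    intro a b
    have h1 : HasDerivAt (fun t => p a t) (fderiv ℝ g (a, b) (0, 1)) b := hasDerivAt_snd' hg a b
    rwa [hpy' a b] at h1
  -- E_x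
  have hEx : ∀ a b : ℝ, HasDerivAt (fun s => E s b) (2 * p a b * E a b) a := by
    intro a b
    have := ((hux a b).const_mul 2).exp
    convert this using 1
    ring
  -- S_x
  have hSx : ∀ a b : ℝ, HasDerivAt (fun s => S s b)
      (4 * ε ^ 2 * p a b * q a b / S a b) a := by
    intro a b
    have hi : HasDerivAt (fun s => 1 + 4 * ε ^ 2 * (p s b) ^ 2)
        (4 * ε ^ 2 * (2 * p a b * q a b)) a := by
      have := (((hpx a b).pow 2).const_mul (4 * ε ^ 2)).const_add 1
      refine this.congr_deriv ?_
      ring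
    have hne : (1 + 4 * ε ^ 2 * (p a b) ^ 2 : ℝ) ≠ 0 := by positivity
    have := (Real.hasDerivAt_sqrt hne).comp a hi
    refine this.congr_deriv ?_
    rw [hS_def]
    field_simp
  -- (E*S)_x and hence q_y (Clairaut)
  have hDval : ∀ a b : ℝ, HasDerivAt (fun s => E s b * S s b)
      (2 * p a b * E a b * S a b + E a b * (4 * ε ^ 2 * p a b * q a b / S a b)) a := by
    intro a b
    exact (hEx a b).mul (hSx a b)
  have hqy : HasDerivAt (fun t => q x t)
      (2 * p x y * E x y * S x y + E x y * (4 * ε ^ 2 * p x y * q x y / S x y)) y := by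
    have h1 : HasDerivAt (fun t => q x t)
        (fderiv ℝ (fun z => fderiv ℝ g z (1, 0)) (x, y) (0, 1)) y :=
      hasDerivAt_snd' (contDiff_pd hg (1, 0)) x y
    have h2 : fderiv ℝ (fun z => fderiv ℝ g z (1, 0)) (x, y) (0, 1)
        = fderiv ℝ (fun z => fderiv ℝ g z (0, 1)) (x, y) (1, 0) := swap_pd hg _ _ _
    have h3 : HasDerivAt (fun s => fderiv ℝ g (s, y) (0, 1))
        (fderiv ℝ (fun z => fderiv ℝ g z (0, 1)) (x, y) (1, 0)) x :=
      hasDerivAt_fst' (contDiff_pd hg (0, 1)) x y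
    have h4 : (fun s => fderiv ℝ g (s, y) (0, 1)) = fun s => E s y * S s y := by
      funext s; exact hpy' s y
    rw [h4] at h3
    have h5 := (hDval x y).unique h3
    rw [h2, ← h5] at h1
    exact h1
  -- U_x = p + ε q / S
  have hUx : ∀ a b : ℝ, deriv (fun s => U s b) a = p a b + ε * q a b / S a b := by
    intro a b
    have hfun : (fun s => U s b) = fun s => u s b + (1/2) * Real.arsinh (2 * ε * p s b) := by
      funext s; rw [hU s b, hderiv_ux s b]
    have hw : HasDerivAt (fun s => 2 * ε * p s b) (2 * ε * q a b) a := (hpx a b).const_mul _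
    have har : HasDerivAt (fun s => Real.arsinh (2 * ε * p s b))
        ((Real.sqrt (1 + (2 * ε * p a b) ^ 2))⁻¹ * (2 * ε * q a b)) a :=
      (Real.hasDerivAt_arsinh _).comp a hw
    have htot : HasDerivAt (fun s => u s b + (1/2) * Real.arsinh (2 * ε * p s b)) _ a :=
      (hux a b).add (har.const_mul (1/2))
    rw [hfun, htot.deriv]
    have hss : Real.sqrt (1 + (2 * ε * p a b) ^ 2) = S a b := by
      rw [hS_def]; congr 1; ring
    rw [hss]
    field_simp
  -- now the y-derivative
  have hfun2 : (fun t => deriv (fun s => U s t) x) = fun t => p x t + ε * q x t / S x t := by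
    funext t; exact hUx x t
  have hSy : HasDerivAt (fun t => S x t) (4 * ε ^ 2 * p x y * E x y) y := by
    have hi : HasDerivAt (fun t => 1 + 4 * ε ^ 2 * (p x t) ^ 2)
        (4 * ε ^ 2 * (2 * p x y * (E x y * S x y))) y := by
      have := (((hpy x y).pow 2).const_mul (4 * ε ^ 2)).const_add 1
      refine this.congr_deriv ?_
      ring
    have hne : (1 + 4 * ε ^ 2 * (p x y) ^ 2 : ℝ) ≠ 0 := by positivity
    have := (Real.hasDerivAt_sqrt hne).comp y hi
    refine this.congr_deriv ?_
    rw [hS_def]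
    field_simp
  have hdiv : HasDerivAt (fun t => ε * q x t / S x t)
      ((ε * (2 * p x y * E x y * S x y + E x y * (4 * ε ^ 2 * p x y * q x y / S x y)) * S x y
        - ε * q x y * (4 * ε ^ 2 * p x y * E x y)) / (S x y) ^ 2) y :=
    (hqy.const_mul ε).div hSy (hSne x y)
  have htot : HasDerivAt (fun t => p x t + ε * q x t / S x t) _ y := (hpy x y).add hdiv
  rw [hfun2, htot.deriv]
  -- RHS
  rw [hU x y, hderiv_ux x y]
  have hexp : Real.exp (2 * (u x y + 1/2 * Real.arsinh (2 * ε * p x y)))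
      = E x y * (2 * ε * p x y + S x y) := by
    rw [show (2 : ℝ) * (u x y + 1/2 * Real.arsinh (2 * ε * p x y))
        = 2 * u x y + Real.arsinh (2 * ε * p x y) by ring, Real.exp_add, Real.exp_arsinh]
    rw [hE_def, hS_def]
    congr 2
    ring_nf
  rw [hexp]
  field_simp [hSne x y]
  ring_nf
end

section
/- The Boussinesq flow w¹_t = 2w²_x - w¹_{xx}, w²_t = -(2/3)w¹_{xxx} - (2/3)w¹w¹_x + w²_{xx} is Hamiltonian with respect to the operator Â₁ = [[0, 3D_x],[3D_x, 0]] and the Hamiltonian functional H = ∫ h(w¹, w², w¹_x, w²_x, ...) dx with δH/δw¹ = (1/3)(2w² - w¹_x) and δH/δw² = ... ; equivalently, there exist differential functions φ₁, φ₂ of (w¹, w², and their x-derivatives) such that w¹_t = 3D_x(φ₂) and w²_t = 3D_x(φ₁) and (φ₁, φ₂) is a variational covector (i.e., its Fréchet derivative as a row is self-adjoint). -/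
open MeasureTheory
open scoped ContDiff

noncomputable section BoussinesqAux

/-- First covector component. -/
def bphi1 (w1 w2 : ℝ → ℝ) (x : ℝ) : ℝ :=
  -(2/9) * deriv (deriv w1) x - (1/9) * (w1 x)^2 + (1/3) * deriv w2 x

/-- Second covector component. -/
def bphi2 (w1 w2 : ℝ → ℝ) (x : ℝ) : ℝ :=
  (2/3) * w2 x - (1/3) * deriv w1 x

/-- Hamiltonian density (local part). -/
def bdens (v1 v2 : ℝ → ℝ) (x : ℝ) : ℝ :=
  (1/3) * (v2 x)^2 - (1/3) * (deriv v1 x) * (v2 x) + (1/9) * (deriv v1 x)^2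
    - (1/27) * (v1 x)^3

/-- The relation "differ by a compactly supported function". -/
def bRel : Setoid (ℝ → ℝ) :=
  ⟨fun f g => HasCompactSupport (f - g), by
    constructor
    · intro f
      show HasCompactSupport (f - f)
      simp only [sub_self]
      exact HasCompactSupport.zero
    · intro f g h
      show HasCompactSupport (g - f)
      rw [← neg_sub f g]
      exact HasCompactSupport.neg h
    · intro f g h hfg hgh
      show HasCompactSupport (f - h)
      rw [← sub_add_sub_cancel f g h]
      exact hfg.add hgh⟩

open Classical in
/-- Choose a smooth representative of a class (when one exists). -/
def bpick (q : Quotient bRel) : ℝ → ℝ :=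
  if h : ∃ g : ℝ → ℝ, ContDiff ℝ (⊤ : ℕ∞) g ∧ Quotient.mk bRel g = q then h.choose else 0

/-- Canonical representative of the class of `f`. -/
def brep (f : ℝ → ℝ) : ℝ → ℝ := bpick (Quotient.mk bRel f)

/-- The (nonlocal, renormalized) Hamiltonian density. -/
def bHam (v1 v2 : ℝ → ℝ) (x : ℝ) : ℝ :=
  bdens v1 v2 x - bdens (brep v1) (brep v2) x

lemma brep_spec {f : ℝ → ℝ} (hf : ContDiff ℝ (⊤ : ℕ∞) f) :
    ContDiff ℝ (⊤ : ℕ∞) (brep f) ∧ HasCompactSupport (brep f - f) := by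
  have h : ∃ g : ℝ → ℝ, ContDiff ℝ (⊤ : ℕ∞) g ∧ Quotient.mk bRel g = Quotient.mk bRel f :=
    ⟨f, hf, rfl⟩
  have : brep f = h.choose := by
    rw [brep, bpick, dif_pos h]
  obtain ⟨hg1, hg2⟩ := h.choose_spec
  refine ⟨this ▸ hg1, ?_⟩
  have := Quotient.exact hg2
  rw [brep, bpick, dif_pos h]
  exact this

lemma brep_congr {f g : ℝ → ℝ} (h : HasCompactSupport (f - g)) :
    brep f = brep g := by
  unfold brep
  have e : Quotient.mk bRel f = Quotient.mk bRel g := Quot.sound (show bRel.r f g from h)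
  rw [e]

end BoussinesqAux

/-- Integral of the derivative of a `C¹` compactly supported function vanishes. -/
lemma integral_deriv_eq_zero' {f : ℝ → ℝ} (hf : ContDiff ℝ 1 f)
    (h2f : HasCompactSupport f) : ∫ x : ℝ, deriv f x = 0 := by
  have hi : Integrable (deriv f) := by
    exact (hf.continuous_deriv le_rfl).integrable_of_hasCompactSupport h2f.deriv
  rw [← intervalIntegral.integral_Iic_add_Ioi (b := (0:ℝ)) hi.integrableOn hi.integrableOn,
    h2f.integral_Iic_deriv_eq hf, h2f.integral_Ioi_deriv_eq hf]
  ring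

/-- The Boussinesq flow `w¹_t = 2w²_x - w¹_{xx}`,
`w²_t = -(2/3)w¹_{xxx} - (2/3)w¹w¹_x + w²_{xx}` is Hamiltonian with respect to
`Â₁ = [[0, 3Dₓ],[3Dₓ, 0]]`: there exist covector components `φ₁, φ₂`
(functionals of `w¹, w²`) such that the right-hand sides of the flow equal
`3Dₓ(φ₂)` and `3Dₓ(φ₁)`, and `(φ₁, φ₂)` is a variational covector, i.e. it is
the variational derivative of some Hamiltonian density `H`
(first-variation characterization over compactly supported variations,
equivalent to the Helmholtz self-adjointness condition). -/
theorem stmt_10 :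
    ∃ φ1 φ2 : (ℝ → ℝ) → (ℝ → ℝ) → ℝ → ℝ,
      (∀ w1 w2 : ℝ → ℝ, ContDiff ℝ (⊤ : ℕ∞) w1 → ContDiff ℝ (⊤ : ℕ∞) w2 → ∀ x : ℝ,
        2 * deriv w2 x - iteratedDeriv 2 w1 x = 3 * deriv (φ2 w1 w2) x ∧
        -(2/3) * iteratedDeriv 3 w1 x - (2/3) * w1 x * deriv w1 x + iteratedDeriv 2 w2 x
          = 3 * deriv (φ1 w1 w2) x) ∧
      (∃ H : (ℝ → ℝ) → (ℝ → ℝ) → ℝ → ℝ,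
        ∀ w1 w2 h1 h2 : ℝ → ℝ,
          ContDiff ℝ (⊤ : ℕ∞) w1 → ContDiff ℝ (⊤ : ℕ∞) w2 → ContDiff ℝ (⊤ : ℕ∞) h1 → ContDiff ℝ (⊤ : ℕ∞) h2 →
          HasCompactSupport h1 → HasCompactSupport h2 →
          deriv (fun s : ℝ =>
              ∫ x : ℝ, H (fun t => w1 t + s * h1 t) (fun t => w2 t + s * h2 t) x) 0
            = ∫ x : ℝ, (φ1 w1 w2 x * h1 x + φ2 w1 w2 x * h2 x)) := by
  refine ⟨bphi1, bphi2, ?_, ?_⟩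
  · -- the flow part
    intro w1 w2 hw1 hw2 x
    have le1 : (1 : WithTop ℕ∞) ≤ ∞ := by exact_mod_cast le_top
    have hw1' : ContDiff ℝ ∞ w1 := hw1.of_le (by simp)
    have hw2' : ContDiff ℝ ∞ w2 := hw2.of_le (by simp)
    have hdw1 : ContDiff ℝ ∞ (deriv w1) := (contDiff_infty_iff_deriv.mp hw1').2
    have hdw2 : ContDiff ℝ ∞ (deriv w2) := (contDiff_infty_iff_deriv.mp hw2').2
    have hddw1 : ContDiff ℝ ∞ (deriv (deriv w1)) := (contDiff_infty_iff_deriv.mp hdw1).2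
    have e2 : iteratedDeriv 2 w1 = deriv (deriv w1) := by
      rw [iteratedDeriv_succ, iteratedDeriv_one]
    have e2' : iteratedDeriv 2 w2 = deriv (deriv w2) := by
      rw [iteratedDeriv_succ, iteratedDeriv_one]
    have e3 : iteratedDeriv 3 w1 = deriv (deriv (deriv w1)) := by
      rw [iteratedDeriv_succ, iteratedDeriv_succ, iteratedDeriv_one]
    constructor
    · have hD : HasDerivAt (bphi2 w1 w2)
          ((2/3) * deriv w2 x - (1/3) * deriv (deriv w1) x) x := by
        exact (((hw2'.differentiable (by simp)) x).hasDerivAt.const_mul (2/3)).sub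
          (((hdw1.differentiable (by simp)) x).hasDerivAt.const_mul (1/3))
      rw [hD.deriv, e2]; ring
    · have hD : HasDerivAt (bphi1 w1 w2)
          (-(2/9) * deriv (deriv (deriv w1)) x
            - (1/9) * ((2:ℕ) * (w1 x)^(2-1) * deriv w1 x)
            + (1/3) * deriv (deriv w2) x) x := by
        exact ((((hddw1.differentiable (by simp)) x).hasDerivAt.const_mul (-(2/9))).sub
            ((((hw1'.differentiable (by simp)) x).hasDerivAt.pow 2).const_mul (1/9))).add
          (((hdw2.differentiable (by simp)) x).hasDerivAt.const_mul (1/3))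
      rw [hD.deriv, e3, e2']
      push_cast
      ring
  · -- the variational part
    refine ⟨bHam, ?_⟩
    intro w1 w2 h1 h2 hw1t hw2t hh1t hh2t hc1 hc2
    have le1 : (1 : WithTop ℕ∞) ≤ ∞ := by exact_mod_cast le_top
    have hw1 : ContDiff ℝ ∞ w1 := hw1t.of_le (by simp)
    have hw2 : ContDiff ℝ ∞ w2 := hw2t.of_le (by simp)
    have hh1 : ContDiff ℝ ∞ h1 := hh1t.of_le (by simp)
    have hh2 : ContDiff ℝ ∞ h2 := hh2t.of_le (by simp)
    obtain ⟨hg1t, hg1c⟩ := brep_spec hw1t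
    obtain ⟨hg2t, hg2c⟩ := brep_spec hw2t
    set g1 := brep w1 with hg1def
    set g2 := brep w2 with hg2def
    have hg1 : ContDiff ℝ ∞ g1 := hg1t.of_le (by simp)
    have hg2 : ContDiff ℝ ∞ g2 := hg2t.of_le (by simp)
    -- continuity facts
    have cw1 : Continuous w1 := hw1.continuous
    have cw2 : Continuous w2 := hw2.continuous
    have ch1 : Continuous h1 := hh1.continuous
    have ch2 : Continuous h2 := hh2.continuous
    have cdw1 : Continuous (deriv w1) := hw1.continuous_deriv le1
    have cdh1 : Continuous (deriv h1) := hh1.continuous_deriv le1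
    have cg1 : Continuous g1 := hg1.continuous
    have cg2 : Continuous g2 := hg2.continuous
    have cdg1 : Continuous (deriv g1) := hg1.continuous_deriv le1
    have hdw1 : ContDiff ℝ ∞ (deriv w1) := (contDiff_infty_iff_deriv.mp hw1).2
    have cddw1 : Continuous (deriv (deriv w1)) := hdw1.continuous_deriv le1
    have cdw2 : Continuous (deriv w2) := hw2.continuous_deriv le1
    -- invariance of the representative
    have hrep1 : ∀ s : ℝ, brep (fun t => w1 t + s * h1 t) = g1 := by
      intro s
      apply brep_congr
      have : (fun t => w1 t + s * h1 t) - w1 = fun t => s * h1 t := by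
        funext t; simp
      rw [this]
      exact hc1.mul_left
    have hrep2 : ∀ s : ℝ, brep (fun t => w2 t + s * h2 t) = g2 := by
      intro s
      apply brep_congr
      have : (fun t => w2 t + s * h2 t) - w2 = fun t => s * h2 t := by
        funext t; simp
      rw [this]
      exact hc2.mul_left
    -- the four coefficient functions
    set A0 : ℝ → ℝ := fun x => bdens w1 w2 x - bdens g1 g2 x with hA0def
    set A1 : ℝ → ℝ := fun x => (2/3) * w2 x * h2 x
        - (1/3) * (deriv w1 x * h2 x + deriv h1 x * w2 x)
        + (2/9) * deriv w1 x * deriv h1 x - (1/9) * (w1 x)^2 * h1 x with hA1def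
    set A2 : ℝ → ℝ := fun x => (1/3) * (h2 x)^2 - (1/3) * deriv h1 x * h2 x
        + (1/9) * (deriv h1 x)^2 - (1/9) * w1 x * (h1 x)^2 with hA2def
    set A3 : ℝ → ℝ := fun x => -(1/27) * (h1 x)^3 with hA3def
    -- pointwise expansion of the integrand
    have hpoint : ∀ s x : ℝ,
        bHam (fun t => w1 t + s * h1 t) (fun t => w2 t + s * h2 t) x
          = A0 x + s * A1 x + s^2 * A2 x + s^3 * A3 x := by
      intro s x
      have hder : deriv (fun t => w1 t + s * h1 t) x = deriv w1 x + s * deriv h1 x := by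
        have : HasDerivAt (fun t => w1 t + s * h1 t) (deriv w1 x + s * deriv h1 x) x :=
          ((hw1.differentiable (by simp) x).hasDerivAt).add
            (((hh1.differentiable (by simp) x).hasDerivAt).const_mul s)
        exact this.deriv
      rw [bHam, hrep1 s, hrep2 s]
      simp only [hA0def, hA1def, hA2def, hA3def, bdens, hder]
      ring
    -- compact support of the coefficients
    have suppA : ∀ (F : ℝ → ℝ),
        (∀ x : ℝ, h1 x = 0 → deriv h1 x = 0 → h2 x = 0 → F x = 0) → HasCompactSupport F := by
      intro F hF
      apply HasCompactSupport.intro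
        ((hc1.union hc1.deriv).union hc2)
      intro x hx
      simp only [Set.mem_union, not_or] at hx
      exact hF x (image_eq_zero_of_notMem_tsupport hx.1.1)
        (image_eq_zero_of_notMem_tsupport hx.1.2) (image_eq_zero_of_notMem_tsupport hx.2)
    have hA1supp : HasCompactSupport A1 := by
      apply suppA; intro x e1 e2 e3; rw [hA1def]; simp only [e1, e2, e3]; ring
    have hA2supp : HasCompactSupport A2 := by
      apply suppA; intro x e1 e2 e3; rw [hA2def]; simp only [e1, e2, e3]; ring
    have hA3supp : HasCompactSupport A3 := by
      apply suppA; intro x e1 e2 e3; rw [hA3def]; simp only [e1]; ring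
    have hA0supp : HasCompactSupport A0 := by
      apply HasCompactSupport.intro (hg1c.union hg2c)
      intro x hx
      simp only [Set.mem_union, not_or] at hx
      have e1 : g1 x = w1 x := by
        have := image_eq_zero_of_notMem_tsupport hx.1
        simpa [sub_eq_zero] using this
      have e2 : g2 x = w2 x := by
        have := image_eq_zero_of_notMem_tsupport hx.2
        simpa [sub_eq_zero] using this
      have ed : deriv g1 x = deriv w1 x := by
        apply Filter.EventuallyEq.deriv_eq
        have hopen : IsOpen (tsupport (g1 - w1))ᶜ := (isClosed_tsupport _).isOpen_compl
        filter_upwards [hopen.mem_nhds hx.1] with y hy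
        have := image_eq_zero_of_notMem_tsupport hy
        simpa [sub_eq_zero] using this
      rw [hA0def]
      simp only [bdens, e1, e2, ed]
      ring
    -- continuity of the coefficients
    have hA0cont : Continuous A0 := by
      rw [hA0def]
      unfold bdens
      fun_prop
    have hA1cont : Continuous A1 := by rw [hA1def]; fun_prop
    have hA2cont : Continuous A2 := by rw [hA2def]; fun_prop
    have hA3cont : Continuous A3 := by rw [hA3def]; fun_prop
    -- integrability
    have iA0 : Integrable A0 := hA0cont.integrable_of_hasCompactSupport hA0supp
    have iA1 : Integrable A1 := hA1cont.integrable_of_hasCompactSupport hA1supp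
    have iA2 : Integrable A2 := hA2cont.integrable_of_hasCompactSupport hA2supp
    have iA3 : Integrable A3 := hA3cont.integrable_of_hasCompactSupport hA3supp
    -- the integral is a cubic polynomial in s
    have key : (fun s : ℝ => ∫ x : ℝ,
        bHam (fun t => w1 t + s * h1 t) (fun t => w2 t + s * h2 t) x)
        = fun s : ℝ => (∫ x : ℝ, A0 x) + s * (∫ x : ℝ, A1 x)
            + s^2 * (∫ x : ℝ, A2 x) + s^3 * (∫ x : ℝ, A3 x) := by
      funext s
      have : (fun x : ℝ => bHam (fun t => w1 t + s * h1 t) (fun t => w2 t + s * h2 t) x)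
          = fun x : ℝ => A0 x + s * A1 x + s^2 * A2 x + s^3 * A3 x := by
        funext x; exact hpoint s x
      rw [this]
      have i1 : Integrable (fun x : ℝ => s * A1 x) := iA1.const_mul s
      have i01 : Integrable (fun x : ℝ => A0 x + s * A1 x) := iA0.add i1
      have i2 : Integrable (fun x : ℝ => s^2 * A2 x) := iA2.const_mul _
      have i012 : Integrable (fun x : ℝ => A0 x + s * A1 x + s^2 * A2 x) := i01.add i2
      have i3 : Integrable (fun x : ℝ => s^3 * A3 x) := iA3.const_mul _
      rw [integral_add i012 i3, integral_add i01 i2, integral_add iA0 i1,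
        integral_const_mul, integral_const_mul, integral_const_mul]
    rw [key]
    -- differentiate the cubic polynomial at 0
    have hcube : HasDerivAt (fun s : ℝ => (∫ x : ℝ, A0 x) + s * (∫ x : ℝ, A1 x)
        + s^2 * (∫ x : ℝ, A2 x) + s^3 * (∫ x : ℝ, A3 x))
        (0 + 1 * (∫ x : ℝ, A1 x) + ((2:ℕ) * (0:ℝ)^(2-1)) * (∫ x : ℝ, A2 x)
          + ((3:ℕ) * (0:ℝ)^(3-1)) * (∫ x : ℝ, A3 x)) 0 := by
      exact (((hasDerivAt_const 0 _).add ((hasDerivAt_id 0).mul_const _)).add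
          ((hasDerivAt_pow 2 0).mul_const _)).add ((hasDerivAt_pow 3 0).mul_const _)
    rw [hcube.deriv]
    have hsimp : (0:ℝ) + 1 * (∫ x : ℝ, A1 x) + ((2:ℕ) * (0:ℝ)^(2-1)) * (∫ x : ℝ, A2 x)
        + ((3:ℕ) * (0:ℝ)^(3-1)) * (∫ x : ℝ, A3 x) = ∫ x : ℝ, A1 x := by
      norm_num
    rw [hsimp]
    -- integration by parts: A1 differs from the covector pairing by an exact derivative
    set G : ℝ → ℝ := fun x => -(1/3) * w2 x * h1 x + (2/9) * deriv w1 x * h1 x with hGdef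
    have hGd : ∀ x : ℝ, HasDerivAt G
        ((-(1/3) * deriv w2 x) * h1 x + (-(1/3) * w2 x) * deriv h1 x
          + (((2/9) * deriv (deriv w1) x) * h1 x + ((2/9) * deriv w1 x) * deriv h1 x)) x := by
      intro x
      exact ((((hw2.differentiable (by simp) x).hasDerivAt.const_mul (-(1/3))).mul
          ((hh1.differentiable (by simp) x).hasDerivAt)).add
        ((((hdw1.differentiable (by simp) x).hasDerivAt.const_mul (2/9)).mul
          ((hh1.differentiable (by simp) x).hasDerivAt))))
    have hGsmooth : ContDiff ℝ 1 G := by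
      rw [hGdef]
      have h1' : ContDiff ℝ 1 w2 := hw2.of_le (by exact_mod_cast le_top)
      have h2' : ContDiff ℝ 1 (deriv w1) := hdw1.of_le (by exact_mod_cast le_top)
      have h3' : ContDiff ℝ 1 h1 := hh1.of_le (by exact_mod_cast le_top)
      exact ((contDiff_const.mul h1').mul h3').add ((contDiff_const.mul h2').mul h3')
    have hGsupp : HasCompactSupport G := by
      apply HasCompactSupport.intro hc1
      intro x hx
      rw [hGdef]
      simp [image_eq_zero_of_notMem_tsupport hx]
    have hGzero : ∫ x : ℝ, deriv G x = 0 := integral_deriv_eq_zero' hGsmooth hGsupp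
    have hsplit : ∀ x : ℝ, A1 x
        = (bphi1 w1 w2 x * h1 x + bphi2 w1 w2 x * h2 x) + deriv G x := by
      intro x
      rw [(hGd x).deriv, hA1def, bphi1, bphi2]
      ring
    have iRHS : Integrable (fun x : ℝ => bphi1 w1 w2 x * h1 x + bphi2 w1 w2 x * h2 x) := by
      apply Continuous.integrable_of_hasCompactSupport
      · unfold bphi1 bphi2; fun_prop
      · apply HasCompactSupport.intro (hc1.union hc2)
        intro x hx
        simp only [Set.mem_union, not_or] at hx
        rw [image_eq_zero_of_notMem_tsupport hx.1, image_eq_zero_of_notMem_tsupport hx.2]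
        ring
    have iDG : Integrable (deriv G) :=
      (hGsmooth.continuous_deriv le_rfl).integrable_of_hasCompactSupport hGsupp.deriv
    calc ∫ x : ℝ, A1 x
        = ∫ x : ℝ, ((bphi1 w1 w2 x * h1 x + bphi2 w1 w2 x * h2 x) + deriv G x) := by
          congr 1; funext x; exact hsplit x
      _ = (∫ x : ℝ, (bphi1 w1 w2 x * h1 x + bphi2 w1 w2 x * h2 x)) + ∫ x : ℝ, deriv G x :=
          integral_add iRHS iDG
      _ = ∫ x : ℝ, (bphi1 w1 w2 x * h1 x + bphi2 w1 w2 x * h2 x) := by rw [hGzero, add_zero]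
end

section
/- The matrix differential operator Â₃^{KB} with entries M₁₁ = uD_x + (1/2)u_x, M₁₂ = D_x³ + ((1/4)u² + v)D_x + (1/4)(u² + 2v)_x, M₂₁ = D_x³ + ((1/4)u² + v)D_x + (1/2)v_x, M₂₂ = (1/2)(2uD_x³ + 3u_xD_x² + (3u_{xx} + 2uv)D_x + u_{xxx} + (uv)_x) is formally skew-adjoint: (Â₃^{KB})* = -Â₃^{KB}. -/
open MeasureTheory Filter

private lemma hdIter {h : ℝ → ℝ} (hh : ContDiff ℝ (⊤ : ℕ∞) h) (n : ℕ) (x : ℝ) :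
    HasDerivAt (iteratedDeriv n h) (iteratedDeriv (n + 1) h x) x := by
  rw [iteratedDeriv_succ]
  exact ((hh.differentiable_iteratedDeriv n (by exact_mod_cast ENat.coe_lt_top n)) x).hasDerivAt

private lemma hd0 {h : ℝ → ℝ} (hh : ContDiff ℝ (⊤ : ℕ∞) h) (x : ℝ) :
    HasDerivAt h (iteratedDeriv 1 h x) x := by
  simpa [iteratedDeriv_zero] using hdIter hh 0 x

private lemma hd1 {h : ℝ → ℝ} (hh : ContDiff ℝ (⊤ : ℕ∞) h) (x : ℝ) :
    HasDerivAt (iteratedDeriv 1 h) (iteratedDeriv 2 h x) x := by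
  simpa using hdIter hh 1 x

private lemma hd2 {h : ℝ → ℝ} (hh : ContDiff ℝ (⊤ : ℕ∞) h) (x : ℝ) :
    HasDerivAt (iteratedDeriv 2 h) (iteratedDeriv 3 h x) x := by
  simpa using hdIter hh 2 x

private lemma csIter {g : ℝ → ℝ} (hg : HasCompactSupport g) (n : ℕ) :
    HasCompactSupport (iteratedDeriv n g) := by
  induction n with
  | zero => simpa [iteratedDeriv_zero] using hg
  | succ n ih => rw [iteratedDeriv_succ]; exact ih.deriv

/-- The explicit form of the first component of the pairing. -/
private noncomputable def AA (u v f1 f2 g1 g2 : ℝ → ℝ) : ℝ → ℝ := fun x =>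
  (u x * iteratedDeriv 1 f1 x + (1/2) * iteratedDeriv 1 u x * f1 x
   + (iteratedDeriv 3 f2 x + ((1/4) * u x ^ 2 + v x) * iteratedDeriv 1 f2 x
      + (1/4) * (2 * u x * iteratedDeriv 1 u x + 2 * iteratedDeriv 1 v x) * f2 x)) * g1 x
  + (iteratedDeriv 3 f1 x + ((1/4) * u x ^ 2 + v x) * iteratedDeriv 1 f1 x
      + (1/2) * iteratedDeriv 1 v x * f1 x
     + (1/2) * (2 * u x * iteratedDeriv 3 f2 x + 3 * iteratedDeriv 1 u x * iteratedDeriv 2 f2 x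
        + (3 * iteratedDeriv 2 u x + 2 * u x * v x) * iteratedDeriv 1 f2 x
        + (iteratedDeriv 3 u x + (iteratedDeriv 1 u x * v x + u x * iteratedDeriv 1 v x)) * f2 x)) * g2 x

/-- The explicit form of the second component of the pairing. -/
private noncomputable def BB (u v f1 f2 g1 g2 : ℝ → ℝ) : ℝ → ℝ := fun x =>
  f1 x * (u x * iteratedDeriv 1 g1 x + (1/2) * iteratedDeriv 1 u x * g1 x
   + (iteratedDeriv 3 g2 x + ((1/4) * u x ^ 2 + v x) * iteratedDeriv 1 g2 x
      + (1/4) * (2 * u x * iteratedDeriv 1 u x + 2 * iteratedDeriv 1 v x) * g2 x))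
  + f2 x * (iteratedDeriv 3 g1 x + ((1/4) * u x ^ 2 + v x) * iteratedDeriv 1 g1 x
      + (1/2) * iteratedDeriv 1 v x * g1 x
     + (1/2) * (2 * u x * iteratedDeriv 3 g2 x + 3 * iteratedDeriv 1 u x * iteratedDeriv 2 g2 x
        + (3 * iteratedDeriv 2 u x + 2 * u x * v x) * iteratedDeriv 1 g2 x
        + (iteratedDeriv 3 u x + (iteratedDeriv 1 u x * v x + u x * iteratedDeriv 1 v x)) * g2 x))

/-- An explicit antiderivative of `AA + BB`. -/
private noncomputable def FF (u v f1 f2 g1 g2 : ℝ → ℝ) : ℝ → ℝ := fun x =>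
  u x * (f1 x * g1 x)
  + (iteratedDeriv 2 f2 x * g1 x + (-1) * (iteratedDeriv 1 f2 x * iteratedDeriv 1 g1 x)
     + f2 x * iteratedDeriv 2 g1 x + ((1/4) * (u x * u x) + v x) * (f2 x * g1 x))
  + (iteratedDeriv 2 f1 x * g2 x + (-1) * (iteratedDeriv 1 f1 x * iteratedDeriv 1 g2 x)
     + f1 x * iteratedDeriv 2 g2 x + ((1/4) * (u x * u x) + v x) * (f1 x * g2 x))
  + u x * (iteratedDeriv 2 f2 x * g2 x + (-1) * (iteratedDeriv 1 f2 x * iteratedDeriv 1 g2 x)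
     + f2 x * iteratedDeriv 2 g2 x)
  + (1/2) * (iteratedDeriv 1 u x * (iteratedDeriv 1 f2 x * g2 x + f2 x * iteratedDeriv 1 g2 x))
  + iteratedDeriv 2 u x * (f2 x * g2 x)
  + u x * v x * (f2 x * g2 x)

private lemma FF_hasDerivAt {u v f1 f2 g1 g2 : ℝ → ℝ}
    (hu : ContDiff ℝ (⊤ : ℕ∞) u) (hv : ContDiff ℝ (⊤ : ℕ∞) v)
    (hf1 : ContDiff ℝ (⊤ : ℕ∞) f1) (hf2 : ContDiff ℝ (⊤ : ℕ∞) f2)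
    (hg1 : ContDiff ℝ (⊤ : ℕ∞) g1) (hg2 : ContDiff ℝ (⊤ : ℕ∞) g2) (x : ℝ) :
    HasDerivAt (FF u v f1 f2 g1 g2)
      (AA u v f1 f2 g1 g2 x + BB u v f1 f2 g1 g2 x) x := by
  have Hu0 := hd0 hu x; have Hu1 := hd1 hu x; have Hu2 := hd2 hu x
  have Hv0 := hd0 hv x
  have Hf10 := hd0 hf1 x; have Hf1a := hd1 hf1 x; have Hf1b := hd2 hf1 x
  have Hf20 := hd0 hf2 x; have Hf2a := hd1 hf2 x; have Hf2b := hd2 hf2 x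
  have Hg10 := hd0 hg1 x; have Hg1a := hd1 hg1 x; have Hg1b := hd2 hg1 x
  have Hg20 := hd0 hg2 x; have Hg2a := hd1 hg2 x; have Hg2b := hd2 hg2 x
  have T1 := Hu0.mul (Hf10.mul Hg10)
  have T2 := (((Hf2b.mul Hg10).add ((Hf2a.mul Hg1a).const_mul (-1))).add (Hf20.mul Hg1b)).add
    ((((Hu0.mul Hu0).const_mul (1/4)).add Hv0).mul (Hf20.mul Hg10))
  have T3 := (((Hf1b.mul Hg20).add ((Hf1a.mul Hg2a).const_mul (-1))).add (Hf10.mul Hg2b)).add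
    ((((Hu0.mul Hu0).const_mul (1/4)).add Hv0).mul (Hf10.mul Hg20))
  have T4 := Hu0.mul (((Hf2b.mul Hg20).add ((Hf2a.mul Hg2a).const_mul (-1))).add (Hf20.mul Hg2b))
  have T5 := (Hu1.mul ((Hf2a.mul Hg20).add (Hf20.mul Hg2a))).const_mul (1/2)
  have T6 := Hu2.mul (Hf20.mul Hg20)
  have T7 := (Hu0.mul Hv0).mul (Hf20.mul Hg20)
  have T := (((((T1.add T2).add T3).add T4).add T5).add T6).add T7
  have hFF : FF u v f1 f2 g1 g2 = fun x =>
      u x * (f1 x * g1 x)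
      + (iteratedDeriv 2 f2 x * g1 x + (-1) * (iteratedDeriv 1 f2 x * iteratedDeriv 1 g1 x)
         + f2 x * iteratedDeriv 2 g1 x + ((1/4) * (u x * u x) + v x) * (f2 x * g1 x))
      + (iteratedDeriv 2 f1 x * g2 x + (-1) * (iteratedDeriv 1 f1 x * iteratedDeriv 1 g2 x)
         + f1 x * iteratedDeriv 2 g2 x + ((1/4) * (u x * u x) + v x) * (f1 x * g2 x))
      + u x * (iteratedDeriv 2 f2 x * g2 x + (-1) * (iteratedDeriv 1 f2 x * iteratedDeriv 1 g2 x)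
         + f2 x * iteratedDeriv 2 g2 x)
      + (1/2) * (iteratedDeriv 1 u x * (iteratedDeriv 1 f2 x * g2 x + f2 x * iteratedDeriv 1 g2 x))
      + iteratedDeriv 2 u x * (f2 x * g2 x)
      + u x * v x * (f2 x * g2 x) := rfl
  rw [hFF]
  convert T using 1
  · rfl
  · rfl
  · rfl
  simp only [AA, BB, Pi.mul_apply, Pi.add_apply]
  ring

/-- The third Hamiltonian structure Â₃ᴷᴮ of the Kaup–Boussinesq system
(rows `M1`, `M2`) is formally skew-adjoint: for all smooth `u, v` and all
smooth compactly supported test pairs, `∫ ⟨Â₃f, g⟩ = -∫ ⟨f, Â₃g⟩`. -/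
theorem stmt_13
    (M1 M2 : (ℝ → ℝ) → (ℝ → ℝ) → (ℝ → ℝ) → (ℝ → ℝ) → ℝ → ℝ)
    (hM1 : ∀ (u v f g : ℝ → ℝ) (x : ℝ), M1 u v f g x =
      (u x * deriv f x + (1/2) * deriv u x * f x)
      + (iteratedDeriv 3 g x + ((1/4) * (u x) ^ 2 + v x) * deriv g x
          + (1/4) * deriv (fun t => (u t) ^ 2 + 2 * v t) x * g x))
    (hM2 : ∀ (u v f g : ℝ → ℝ) (x : ℝ), M2 u v f g x =
      (iteratedDeriv 3 f x + ((1/4) * (u x) ^ 2 + v x) * deriv f x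
          + (1/2) * deriv v x * f x)
      + (1/2) * (2 * u x * iteratedDeriv 3 g x + 3 * deriv u x * iteratedDeriv 2 g x
          + (3 * iteratedDeriv 2 u x + 2 * u x * v x) * deriv g x
          + (iteratedDeriv 3 u x + deriv (fun t => u t * v t) x) * g x)) :
    ∀ u v f1 f2 g1 g2 : ℝ → ℝ,
      ContDiff ℝ (⊤ : ℕ∞) u → ContDiff ℝ (⊤ : ℕ∞) v →
      ContDiff ℝ (⊤ : ℕ∞) f1 → ContDiff ℝ (⊤ : ℕ∞) f2 → ContDiff ℝ (⊤ : ℕ∞) g1 → ContDiff ℝ (⊤ : ℕ∞) g2 →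
      HasCompactSupport f1 → HasCompactSupport f2 →
      HasCompactSupport g1 → HasCompactSupport g2 →
      ∫ x : ℝ, (M1 u v f1 f2 x * g1 x + M2 u v f1 f2 x * g2 x)
        = -∫ x : ℝ, (f1 x * M1 u v g1 g2 x + f2 x * M2 u v g1 g2 x) := by
  intro u v f1 f2 g1 g2 hu hv hf1 hf2 hg1 hg2 cf1 cf2 cg1 cg2
  -- derivatives of the two composite coefficient functions
  have e1 : ∀ x : ℝ, deriv (fun t => (u t) ^ 2 + 2 * v t) x
      = 2 * u x * iteratedDeriv 1 u x + 2 * iteratedDeriv 1 v x := by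
    intro x
    have := (((hd0 hu x).pow 2).add ((hd0 hv x).const_mul 2)).deriv
    rw [show (fun t => u t ^ 2 + 2 * v t) = (u ^ 2 + fun y => 2 * v y) from rfl, this]; push_cast; ring
  have e2 : ∀ x : ℝ, deriv (fun t => u t * v t) x
      = iteratedDeriv 1 u x * v x + u x * iteratedDeriv 1 v x := by
    intro x
    exact ((hd0 hu x).mul (hd0 hv x)).deriv
  have d1 : ∀ h : ℝ → ℝ, ContDiff ℝ (⊤ : ℕ∞) h → deriv h = iteratedDeriv 1 h := by
    intro h hh; rw [iteratedDeriv_one]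
  -- rewrite the two integrands in explicit form
  have hA : (fun x => M1 u v f1 f2 x * g1 x + M2 u v f1 f2 x * g2 x)
      = AA u v f1 f2 g1 g2 := by
    funext x
    rw [hM1, hM2, e1 x, e2 x, d1 u hu, d1 v hv, d1 f1 hf1, d1 f2 hf2]
    simp only [AA]
  have hB : (fun x => f1 x * M1 u v g1 g2 x + f2 x * M2 u v g1 g2 x)
      = BB u v f1 f2 g1 g2 := by
    funext x
    rw [hM1, hM2, e1 x, e2 x, d1 u hu, d1 v hv, d1 g1 hg1, d1 g2 hg2]
    simp only [BB]
  -- continuity facts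
  have cu : ∀ n : ℕ, Continuous (iteratedDeriv n u) := fun n => hu.continuous_iteratedDeriv n (by exact_mod_cast le_top)
  have cv : ∀ n : ℕ, Continuous (iteratedDeriv n v) := fun n => hv.continuous_iteratedDeriv n (by exact_mod_cast le_top)
  have cF1 : ∀ n : ℕ, Continuous (iteratedDeriv n f1) := fun n => hf1.continuous_iteratedDeriv n (by exact_mod_cast le_top)
  have cF2 : ∀ n : ℕ, Continuous (iteratedDeriv n f2) := fun n => hf2.continuous_iteratedDeriv n (by exact_mod_cast le_top)
  have cG1 : ∀ n : ℕ, Continuous (iteratedDeriv n g1) := fun n => hg1.continuous_iteratedDeriv n (by exact_mod_cast le_top)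
  have cG2 : ∀ n : ℕ, Continuous (iteratedDeriv n g2) := fun n => hg2.continuous_iteratedDeriv n (by exact_mod_cast le_top)
  have hcu := hu.continuous; have hcv := hv.continuous
  have hcf1 := hf1.continuous; have hcf2 := hf2.continuous
  have hcg1 := hg1.continuous; have hcg2 := hg2.continuous
  have cu1 := cu 1; have cu2 := cu 2; have cu3 := cu 3; have cv1 := cv 1
  have cf11 := cF1 1; have cf13 := cF1 3; have cf21 := cF2 1; have cf22 := cF2 2; have cf23 := cF2 3
  have cg11 := cG1 1; have cg13 := cG1 3; have cg21 := cG2 1; have cg22 := cG2 2; have cg23 := cG2 3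
  have contAA : Continuous (AA u v f1 f2 g1 g2) := by
    unfold AA; fun_prop
  have contBB : Continuous (BB u v f1 f2 g1 g2) := by
    unfold BB; fun_prop
  -- compact-support facts
  have kg1 : ∀ n : ℕ, HasCompactSupport (iteratedDeriv n g1) := fun n => csIter cg1 n
  have kg2 : ∀ n : ℕ, HasCompactSupport (iteratedDeriv n g2) := fun n => csIter cg2 n
  have csAA : HasCompactSupport (AA u v f1 f2 g1 g2) := by
    unfold AA
    exact HasCompactSupport.add cg1.mul_left cg2.mul_left
  have csBB : HasCompactSupport (BB u v f1 f2 g1 g2) := by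
    unfold BB
    exact HasCompactSupport.add cf1.mul_right cf2.mul_right
  have intAA : Integrable (AA u v f1 f2 g1 g2) := contAA.integrable_of_hasCompactSupport csAA
  have intBB : Integrable (BB u v f1 f2 g1 g2) := contBB.integrable_of_hasCompactSupport csBB
  have csFF : HasCompactSupport (FF u v f1 f2 g1 g2) := by
    unfold FF
    exact ((((((HasCompactSupport.mul_left cg1.mul_left).add
      ((((cg1.mul_left).add (((kg1 1).mul_left).mul_left)).add ((kg1 2).mul_left)).add
        ((cg1.mul_left).mul_left))).add
      ((((cg2.mul_left).add (((kg2 1).mul_left).mul_left)).add ((kg2 2).mul_left)).add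
        ((cg2.mul_left).mul_left))).add
      ((((cg2.mul_left).add (((kg2 1).mul_left).mul_left)).add ((kg2 2).mul_left)).mul_left)).add
      ((((cg2.mul_left).add ((kg2 1).mul_left)).mul_left).mul_left)).add
      ((cg2.mul_left).mul_left)).add
      ((cg2.mul_left).mul_left)
  have hbot : Tendsto (FF u v f1 f2 g1 g2) atBot (nhds 0) :=
    (csFF.is_zero_at_infty).mono_left atBot_le_cocompact
  have htop : Tendsto (FF u v f1 f2 g1 g2) atTop (nhds 0) :=
    (csFF.is_zero_at_infty).mono_left atTop_le_cocompact
  have key : ∫ x : ℝ, (AA u v f1 f2 g1 g2 x + BB u v f1 f2 g1 g2 x) = 0 - 0 :=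
    integral_of_hasDerivAt_of_tendsto (FF_hasDerivAt hu hv hf1 hf2 hg1 hg2)
      (intAA.add intBB) hbot htop
  rw [integral_add intAA intBB] at key
  rw [hA, hB]
  linarith
end

section
/- For the extended Liouville equation E(ε): u_{xy} = e^{2u}√(1+4ε²u_x²), the operator □̄ = u_y + (1/2)D_y maps any differential function φ̄(y,[w̄]) of the integral w̄ = u_{yy} - u_y² - ε²e^{4u} to a symmetry of E(ε); moreover the induced bracket on its domain satisfies [□̄(p), □̄(q)] = □̄(p_y q - p q_y + Ev_{□̄(p)}(q) - Ev_{□̄(q)}(p)) for any p(y,[w̄]), q(y,[w̄]). -/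
open Real Function

section Machinery

variable {E : Type*} [NormedAddCommGroup E] [NormedSpace ℝ E]

noncomputable def pd (f : E → ℝ → ℝ) : E → ℝ → ℝ := fun e y => deriv (f e) y

noncomputable def xd (f : ℝ → ℝ → ℝ) : ℝ → ℝ → ℝ := fun x y => deriv (fun s => f s y) x

lemma contDiff_section {f : E → ℝ → ℝ} (h : ContDiff ℝ (⊤ : ℕ∞) (uncurry f)) (e : E) :
    ContDiff ℝ (⊤ : ℕ∞) (f e) :=
  h.comp (contDiff_const.prodMk contDiff_id)

lemma hasDerivAt_pd {f : E → ℝ → ℝ} (h : ContDiff ℝ (⊤ : ℕ∞) (uncurry f)) (e : E) (y : ℝ) :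
    HasDerivAt (f e) (pd f e y) y :=
  ((contDiff_section h e).differentiable (by simp) y).hasDerivAt

lemma hasDerivAt_section₂' {f : E → ℝ → ℝ} (h : ContDiff ℝ (⊤ : ℕ∞) (uncurry f)) (e : E) (y : ℝ) :
    HasDerivAt (f e) (fderiv ℝ (uncurry f) (e, y) (0, 1)) y := by
  have hF : HasFDerivAt (uncurry f) (fderiv ℝ (uncurry f) (e, y)) (e, y) :=
    (h.differentiable (by simp) (e, y)).hasFDerivAt
  have hline : HasDerivAt (fun t : ℝ => ((e, t) : E × ℝ)) ((0 : E), (1 : ℝ)) y :=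
    (hasDerivAt_const y e).prodMk (hasDerivAt_id y)
  exact hF.comp_hasDerivAt y hline

lemma pd_eq_fderiv {f : E → ℝ → ℝ} (h : ContDiff ℝ (⊤ : ℕ∞) (uncurry f)) (e : E) (y : ℝ) :
    pd f e y = fderiv ℝ (uncurry f) (e, y) (0, 1) :=
  (hasDerivAt_section₂' h e y).deriv

lemma contDiff_pd_s15 {f : E → ℝ → ℝ} (h : ContDiff ℝ (⊤ : ℕ∞) (uncurry f)) :
    ContDiff ℝ (⊤ : ℕ∞) (uncurry (pd f)) := by
  have : uncurry (pd f) = fun z : E × ℝ => fderiv ℝ (uncurry f) z ((0 : E), (1 : ℝ)) := by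
    funext z
    exact pd_eq_fderiv h z.1 z.2
  rw [this]
  exact (h.fderiv_right (by simp)).clm_apply contDiff_const

lemma contDiff_pd_iter {f : E → ℝ → ℝ} (h : ContDiff ℝ (⊤ : ℕ∞) (uncurry f)) (n : ℕ) :
    ContDiff ℝ (⊤ : ℕ∞) (uncurry (pd^[n] f)) := by
  induction n generalizing f with
  | zero => simpa using h
  | succ n ih =>
    rw [Function.iterate_succ_apply]
    exact ih (contDiff_pd_s15 h)

omit [NormedAddCommGroup E] [NormedSpace ℝ E] in
lemma iteratedDeriv_eq_pd_iter (n : ℕ) (f : E → ℝ → ℝ) (e : E) (y : ℝ) :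
    iteratedDeriv n (f e) y = (pd^[n] f) e y := by
  induction n generalizing f with
  | zero => simp
  | succ n ih =>
    rw [iteratedDeriv_succ', Function.iterate_succ_apply]
    exact ih (pd f)

omit [NormedAddCommGroup E] [NormedSpace ℝ E] in
lemma iteratedDeriv_two_pd (f : E → ℝ → ℝ) (e : E) (y : ℝ) :
    iteratedDeriv 2 (fun t => f e t) y = pd (pd f) e y := by
  rw [show (fun t => f e t) = f e from rfl, iteratedDeriv_eq_pd_iter 2 f e y]
  rfl

lemma contDiff_sw {f : ℝ → ℝ → ℝ} (h : ContDiff ℝ (⊤ : ℕ∞) (uncurry f)) :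
    ContDiff ℝ (⊤ : ℕ∞) (uncurry (fun y x => f x y)) := by
  have : uncurry (fun y x => f x y) = uncurry f ∘ Prod.swap := rfl
  rw [this]
  exact h.comp (contDiff_snd.prodMk contDiff_fst)

lemma contDiff_xd {f : ℝ → ℝ → ℝ} (h : ContDiff ℝ (⊤ : ℕ∞) (uncurry f)) :
    ContDiff ℝ (⊤ : ℕ∞) (uncurry (xd f)) := by
  have h2 := contDiff_pd_s15 (contDiff_sw h)
  exact contDiff_sw h2

lemma hasDerivAt_xd {f : ℝ → ℝ → ℝ} (h : ContDiff ℝ (⊤ : ℕ∞) (uncurry f)) (x y : ℝ) :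
    HasDerivAt (fun s => f s y) (xd f x y) x :=
  hasDerivAt_pd (contDiff_sw h) y x

/-- Clairaut's theorem for smooth functions of two real variables. -/
lemma clairaut_s15 {f : ℝ → ℝ → ℝ} (h : ContDiff ℝ (⊤ : ℕ∞) (uncurry f)) (x y : ℝ) :
    xd (pd f) x y = pd (xd f) x y := by
  set F := uncurry f with hF
  have hdF : Differentiable ℝ F := h.differentiable (by simp)
  have hdF' : Differentiable ℝ (fderiv ℝ F) :=
    (h.fderiv_right (m := (⊤ : ℕ∞)) (by simp)).differentiable (by simp)
  have hsymm := second_derivative_symmetric (f := F) (f' := fderiv ℝ F)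
    (f'' := fderiv ℝ (fderiv ℝ F) (x, y))
    (fun z => (hdF z).hasFDerivAt) ((hdF' (x, y)).hasFDerivAt)
  have hL : xd (pd f) x y = fderiv ℝ (fderiv ℝ F) (x, y) (1, 0) (0, 1) := by
    have h1 : (fun s => pd f s y) = fun s => fderiv ℝ F (s, y) ((0 : ℝ), (1 : ℝ)) := by
      funext s; exact pd_eq_fderiv h s y
    have hline : HasDerivAt (fun s : ℝ => ((s, y) : ℝ × ℝ)) ((1 : ℝ), (0 : ℝ)) x :=
      (hasDerivAt_id x).prodMk (hasDerivAt_const x y)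
    have h2 : HasDerivAt (fun s => fderiv ℝ F (s, y))
        (fderiv ℝ (fderiv ℝ F) (x, y) (1, 0)) x :=
      (hdF' (x, y)).hasFDerivAt.comp_hasDerivAt x hline
    have h3 : HasDerivAt (fun s => fderiv ℝ F (s, y) ((0 : ℝ), (1 : ℝ)))
        (fderiv ℝ (fderiv ℝ F) (x, y) (1, 0) (0, 1)) x := by
      have := h2.clm_apply (hasDerivAt_const x ((0 : ℝ), (1 : ℝ)))
      simpa using this
    show deriv (fun s => pd f s y) x = _
    rw [h1]
    exact h3.deriv
  have hR : pd (xd f) x y = fderiv ℝ (fderiv ℝ F) (x, y) (0, 1) (1, 0) := by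
    have h1 : (fun t => xd f x t) = fun t => fderiv ℝ F (x, t) ((1 : ℝ), (0 : ℝ)) := by
      funext t
      have hline : HasDerivAt (fun s : ℝ => ((s, t) : ℝ × ℝ)) ((1 : ℝ), (0 : ℝ)) x :=
        (hasDerivAt_id x).prodMk (hasDerivAt_const x t)
      exact ((hdF (x, t)).hasFDerivAt.comp_hasDerivAt x hline).deriv
    have hline : HasDerivAt (fun t : ℝ => ((x, t) : ℝ × ℝ)) ((0 : ℝ), (1 : ℝ)) y :=
      (hasDerivAt_const y x).prodMk (hasDerivAt_id y)
    have h2 : HasDerivAt (fun t => fderiv ℝ F (x, t))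
        (fderiv ℝ (fderiv ℝ F) (x, y) (0, 1)) y :=
      (hdF' (x, y)).hasFDerivAt.comp_hasDerivAt y hline
    have h3 : HasDerivAt (fun t => fderiv ℝ F (x, t) ((1 : ℝ), (0 : ℝ)))
        (fderiv ℝ (fderiv ℝ F) (x, y) (0, 1) (1, 0)) y := by
      have := h2.clm_apply (hasDerivAt_const y ((1 : ℝ), (0 : ℝ)))
      simpa using this
    show deriv (fun t => xd f x t) y = _
    rw [h1]
    exact h3.deriv
  rw [hL, hR, hsymm]

lemma contDiff_jetcomp {N : ℕ} {r : ℝ → (Fin N → ℝ) → ℝ} (hr : ContDiff ℝ (⊤ : ℕ∞) (uncurry r))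
    {W : E → ℝ → ℝ} (hW : ContDiff ℝ (⊤ : ℕ∞) (uncurry W)) :
    ContDiff ℝ (⊤ : ℕ∞) (uncurry (fun e y => r y (fun n : Fin N => iteratedDeriv (n : ℕ) (W e) y))) := by
  have heq : uncurry (fun e y => r y (fun n : Fin N => iteratedDeriv (n : ℕ) (W e) y))
      = (uncurry r) ∘ (fun z : E × ℝ => (z.2, fun n : Fin N => (pd^[(n : ℕ)] W) z.1 z.2)) := by
    funext z
    simp only [uncurry, Function.comp]
    congr 1
    funext n
    exact iteratedDeriv_eq_pd_iter (n : ℕ) W z.1 z.2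
  rw [heq]
  apply hr.comp
  apply contDiff_snd.prodMk
  apply contDiff_pi.mpr
  intro n
  exact (contDiff_pd_iter hW (n : ℕ)).comp (contDiff_fst.prodMk contDiff_snd)

lemma contDiff_deriv_one {P : ℝ → ℝ} (hP : ContDiff ℝ (⊤ : ℕ∞) P) : ContDiff ℝ (⊤ : ℕ∞) (deriv P) := by
  have h : ContDiff ℝ (⊤ : ℕ∞) (uncurry (fun _ : ℝ => P)) := hP.comp contDiff_snd
  have h2 := contDiff_pd_s15 h
  have : deriv P = fun y => (pd (fun _ : ℝ => P)) 0 y := rfl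
  rw [this]
  exact contDiff_section h2 0

end Machinery

/-- For the extended Liouville equation `E(ε): u_{xy} = e^{2u}√(1+4ε²u_x²)`,
the operator `□̄ = u_y + (1/2)D_y` maps any differential function
`p(y,[w̄])` of the integral `w̄ = u_{yy} - u_y² - ε²e^{4u}` to a symmetry of
`E(ε)` (i.e. the generating section solves the linearized equation
`ℓ_F(φ) = D_xD_yφ - 2e^{2u}√(1+4ε²u_x²)·φ - 4ε²e^{2u}u_x(1+4ε²u_x²)^{-1/2}·D_xφ ≐ 0`
on solutions), and the commutator of two such symmetries, computed via the
evolutionary (Gateaux) derivatives `Ev`, satisfies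
`[□̄(p), □̄(q)] = □̄(p_y q − p q_y + Ev_{□̄(p)}(q) − Ev_{□̄(q)}(p))`. -/
theorem stmt_15 (ε : ℝ) (N : ℕ)
    (u : ℝ → ℝ → ℝ) (hu : ContDiff ℝ (⊤ : ℕ∞) (Function.uncurry u))
    (hsol : ∀ x y : ℝ, deriv (fun t => deriv (fun s => u s t) x) y =
      Real.exp (2 * u x y) * Real.sqrt (1 + 4 * ε ^ 2 * (deriv (fun s => u s y) x) ^ 2))
    (p q : ℝ → (Fin N → ℝ) → ℝ)
    (hp : ContDiff ℝ (⊤ : ℕ∞) (Function.uncurry p)) (hq : ContDiff ℝ (⊤ : ℕ∞) (Function.uncurry q))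
    -- the integral w̄ of an arbitrary field v
    (Wb : (ℝ → ℝ → ℝ) → ℝ → ℝ → ℝ)
    (hWb : ∀ (v : ℝ → ℝ → ℝ) (x y : ℝ), Wb v x y =
      iteratedDeriv 2 (fun t => v x t) y - (deriv (fun t => v x t) y) ^ 2
        - ε ^ 2 * Real.exp (4 * v x y))
    -- composition of a differential function r(y,[w̄]) with the jet of w̄[v]
    (Pf : (ℝ → (Fin N → ℝ) → ℝ) → (ℝ → ℝ → ℝ) → ℝ → ℝ → ℝ)
    (hPf : ∀ (r : ℝ → (Fin N → ℝ) → ℝ) (v : ℝ → ℝ → ℝ) (x y : ℝ),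
      Pf r v x y = r y (fun n => iteratedDeriv (n : ℕ) (fun t => Wb v x t) y))
    -- the operator □̄ = u_y + (1/2)D_y
    (Box : (ℝ → (Fin N → ℝ) → ℝ) → (ℝ → ℝ → ℝ) → ℝ → ℝ → ℝ)
    (hBox : ∀ (r : ℝ → (Fin N → ℝ) → ℝ) (v : ℝ → ℝ → ℝ) (x y : ℝ),
      Box r v x y = deriv (fun t => v x t) y * Pf r v x y
        + (1/2) * deriv (fun t => Pf r v x t) y)
    -- evolutionary (Gateaux) derivative of a functional F in the direction φ
    (Ev : ((ℝ → ℝ → ℝ) → ℝ → ℝ → ℝ) → ((ℝ → ℝ → ℝ) → ℝ → ℝ → ℝ) →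
      (ℝ → ℝ → ℝ) → ℝ → ℝ → ℝ)
    (hEv : ∀ (φ F : (ℝ → ℝ → ℝ) → ℝ → ℝ → ℝ) (v : ℝ → ℝ → ℝ) (x y : ℝ),
      Ev φ F v x y = deriv (fun s : ℝ => F (fun a b => v a b + s * φ v a b) x y) 0) :
    -- (1) □̄(p) is a symmetry of E(ε):
    (∀ x y : ℝ,
      deriv (fun t => deriv (fun s => Box p u s t) x) y
        - 2 * Real.exp (2 * u x y)
            * Real.sqrt (1 + 4 * ε ^ 2 * (deriv (fun s => u s y) x) ^ 2)
            * Box p u x y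
        - 4 * ε ^ 2 * Real.exp (2 * u x y) * deriv (fun s => u s y) x
            / Real.sqrt (1 + 4 * ε ^ 2 * (deriv (fun s => u s y) x) ^ 2)
            * deriv (fun s => Box p u s y) x = 0) ∧
    -- (2) the bracket identity [□̄(p),□̄(q)] = □̄(p_y q − p q_y + Ev terms):
    (∀ x y : ℝ,
      Ev (Box p) (Box q) u x y - Ev (Box q) (Box p) u x y =
        (fun Arg : ℝ → ℝ → ℝ =>
          deriv (fun t => u x t) y * Arg x y + (1/2) * deriv (fun t => Arg x t) y)
        (fun a b =>
          deriv (fun t => Pf p u a t) b * Pf q u a b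
            - Pf p u a b * deriv (fun t => Pf q u a t) b
            + Ev (Box p) (Pf q) u a b - Ev (Box q) (Pf p) u a b)) := by
  -- basic smoothness
  have hpdu : ContDiff ℝ (⊤ : ℕ∞) (uncurry (pd u)) := contDiff_pd_s15 hu
  have hxdu : ContDiff ℝ (⊤ : ℕ∞) (uncurry (xd u)) := contDiff_xd hu
  have hpdpdu : ContDiff ℝ (⊤ : ℕ∞) (uncurry (pd (pd u))) := contDiff_pd_s15 hpdu
  -- the solution equation in pd/xd language
  have hsol' : ∀ x y : ℝ, pd (xd u) x y =
      Real.exp (2 * u x y) * Real.sqrt (1 + 4 * ε ^ 2 * (xd u x y) ^ 2) := fun x y => hsol x y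
  have hgpos : ∀ x y : ℝ, (0:ℝ) < 1 + 4 * ε ^ 2 * (xd u x y) ^ 2 := by
    intro x y; positivity
  have hsqpos : ∀ x y : ℝ, (0:ℝ) < Real.sqrt (1 + 4 * ε ^ 2 * (xd u x y) ^ 2) :=
    fun x y => Real.sqrt_pos.mpr (hgpos x y)
  have hee : ∀ x y : ℝ, Real.exp (4 * u x y) = Real.exp (2 * u x y) * Real.exp (2 * u x y) := by
    intro x y; rw [← Real.exp_add]; congr 1; ring
  -- y-derivative of the RHS A of the equation
  have hAderiv : ∀ x y : ℝ,
      HasDerivAt (fun t => Real.exp (2 * u x t) * Real.sqrt (1 + 4 * ε ^ 2 * (xd u x t) ^ 2))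
        (2 * pd u x y * (Real.exp (2 * u x y) * Real.sqrt (1 + 4 * ε ^ 2 * (xd u x y) ^ 2))
          + 4 * ε ^ 2 * xd u x y * Real.exp (4 * u x y)) y := by
    intro x y
    have h1 : HasDerivAt (fun t => u x t) (pd u x y) y := hasDerivAt_pd hu x y
    have h2 : HasDerivAt (fun t => xd u x t) (pd (xd u) x y) y := hasDerivAt_pd hxdu x y
    have hexp : HasDerivAt (fun t => Real.exp (2 * u x t))
        (Real.exp (2 * u x y) * (2 * pd u x y)) y := (h1.const_mul 2).exp
    have hg : HasDerivAt (fun t => 1 + 4 * ε ^ 2 * (xd u x t) ^ 2)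
        (4 * ε ^ 2 * (2 * xd u x y * pd (xd u) x y)) y := by
      have := ((h2.pow 2).const_mul (4 * ε ^ 2)).const_add 1
      refine this.congr_deriv ?_
      simp only [Nat.cast_ofNat, Nat.reduceSub]; ring
    have hsq : HasDerivAt (fun t => Real.sqrt (1 + 4 * ε ^ 2 * (xd u x t) ^ 2))
        ((4 * ε ^ 2 * (2 * xd u x y * pd (xd u) x y))
          / (2 * Real.sqrt (1 + 4 * ε ^ 2 * (xd u x y) ^ 2))) y :=
      hg.sqrt (hgpos x y).ne'
    have := hexp.mul hsq
    refine this.congr_deriv ?_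
    rw [hsol' x y, hee x y]
    field_simp
  -- the integral as a smooth function G
  obtain ⟨G, hGdef⟩ : ∃ f : ℝ → ℝ → ℝ,
      f = fun x y => pd (pd u) x y - (pd u x y) ^ 2 - ε ^ 2 * Real.exp (4 * u x y) := ⟨_, rfl⟩
  have hGsm : ContDiff ℝ (⊤ : ℕ∞) (uncurry G) := by
    have : uncurry G = fun z : ℝ × ℝ =>
        pd (pd u) z.1 z.2 - (pd u z.1 z.2) ^ 2 - ε ^ 2 * Real.exp (4 * u z.1 z.2) := by
      rw [hGdef]; rfl
    rw [this]
    exact (hpdpdu.sub (hpdu.pow 2)).sub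
      (contDiff_const.mul (Real.contDiff_exp.comp (contDiff_const.mul hu)))
  have hWbu : ∀ x y : ℝ, Wb u x y = G x y := by
    intro x y
    rw [hWb u x y, iteratedDeriv_two_pd u x y, hGdef]
    rfl
  have hxdG : ∀ x y : ℝ, xd G x y = 0 := by
    intro x y
    have h1 : HasDerivAt (fun s => pd (pd u) s y) (xd (pd (pd u)) x y) x :=
      hasDerivAt_xd hpdpdu x y
    have h2 : HasDerivAt (fun s => pd u s y) (xd (pd u) x y) x := hasDerivAt_xd hpdu x y
    have h3 : HasDerivAt (fun s => u s y) (xd u x y) x := hasDerivAt_xd hu x y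
    have hexp : HasDerivAt (fun s => ε ^ 2 * Real.exp (4 * u s y))
        (ε ^ 2 * (Real.exp (4 * u x y) * (4 * xd u x y))) x := ((h3.const_mul 4).exp).const_mul _
    have hc1 : xd (pd u) x y =
        Real.exp (2 * u x y) * Real.sqrt (1 + 4 * ε ^ 2 * (xd u x y) ^ 2) := by
      rw [clairaut_s15 hu x y, hsol' x y]
    have hc2 : xd (pd (pd u)) x y =
        2 * pd u x y * (Real.exp (2 * u x y) * Real.sqrt (1 + 4 * ε ^ 2 * (xd u x y) ^ 2))
          + 4 * ε ^ 2 * xd u x y * Real.exp (4 * u x y) := by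
      rw [clairaut_s15 hpdu x y]
      have hfun : (fun t => xd (pd u) x t)
          = fun t => Real.exp (2 * u x t) * Real.sqrt (1 + 4 * ε ^ 2 * (xd u x t) ^ 2) := by
        funext t; rw [clairaut_s15 hu x t, hsol' x t]
      show deriv (fun t => xd (pd u) x t) y = _
      rw [hfun]
      exact (hAderiv x y).deriv
    have hall : HasDerivAt (fun s => G s y)
        (xd (pd (pd u)) x y - 2 * (pd u x y) ^ 1 * xd (pd u) x y
          - ε ^ 2 * (Real.exp (4 * u x y) * (4 * xd u x y))) x := by
      have hfun : (fun s => G s y)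
          = fun s => pd (pd u) s y - (pd u s y) ^ 2 - ε ^ 2 * Real.exp (4 * u s y) := by
        funext s; rw [hGdef]
      rw [hfun]
      have := (h1.sub (h2.pow 2)).sub hexp
      refine this.congr_deriv ?_
      norm_num
    show deriv (fun s => G s y) x = 0
    rw [hall.deriv, hc1, hc2]
    ring
  have hGconst : ∀ x y : ℝ, G x y = G 0 y := by
    intro x y
    have hdiff : Differentiable ℝ (fun s => G s y) :=
      fun s => (hasDerivAt_xd hGsm s y).differentiableAt
    have hzero : ∀ s : ℝ, deriv (fun s => G s y) s = 0 :=
      fun s => (hasDerivAt_xd hGsm s y).deriv.trans (hxdG s y)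
    exact is_const_of_deriv_eq_zero hdiff hzero x 0
  have hWbfun : ∀ x : ℝ, (fun t => Wb u x t) = G 0 := by
    intro x; funext t; rw [hWbu x t, hGconst x t]
  -- P and Q
  obtain ⟨P, hPdef⟩ : ∃ f : ℝ → ℝ,
      f = fun y => p y (fun n : Fin N => iteratedDeriv (n : ℕ) (G 0) y) := ⟨_, rfl⟩
  obtain ⟨Q, hQdef⟩ : ∃ f : ℝ → ℝ,
      f = fun y => q y (fun n : Fin N => iteratedDeriv (n : ℕ) (G 0) y) := ⟨_, rfl⟩
  have hPfp : ∀ x y : ℝ, Pf p u x y = P y := by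
    intro x y; rw [hPf p u x y, hWbfun x, hPdef]
  have hPfq : ∀ x y : ℝ, Pf q u x y = Q y := by
    intro x y; rw [hPf q u x y, hWbfun x, hQdef]
  have hPsm : ContDiff ℝ (⊤ : ℕ∞) P := by
    have hWc : ContDiff ℝ (⊤ : ℕ∞) (uncurry (fun _ : ℝ => G 0)) :=
      (contDiff_section hGsm 0).comp contDiff_snd
    have h := contDiff_jetcomp hp hWc
    have h2 := contDiff_section h 0
    rw [hPdef]; exact h2
  have hQsm : ContDiff ℝ (⊤ : ℕ∞) Q := by
    have hWc : ContDiff ℝ (⊤ : ℕ∞) (uncurry (fun _ : ℝ => G 0)) :=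
      (contDiff_section hGsm 0).comp contDiff_snd
    have h := contDiff_jetcomp hq hWc
    have h2 := contDiff_section h 0
    rw [hQdef]; exact h2
  have hPdsm : ContDiff ℝ (⊤ : ℕ∞) (deriv P) := contDiff_deriv_one hPsm
  have hQdsm : ContDiff ℝ (⊤ : ℕ∞) (deriv Q) := contDiff_deriv_one hQsm
  have hPder : ∀ y : ℝ, HasDerivAt P (deriv P y) y :=
    fun y => (hPsm.differentiable (by simp) y).hasDerivAt
  have hQder : ∀ y : ℝ, HasDerivAt Q (deriv Q y) y :=
    fun y => (hQsm.differentiable (by simp) y).hasDerivAt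
  have hPdder : ∀ y : ℝ, HasDerivAt (deriv P) (deriv (deriv P) y) y :=
    fun y => (hPdsm.differentiable (by simp) y).hasDerivAt
  have hQdder : ∀ y : ℝ, HasDerivAt (deriv Q) (deriv (deriv Q) y) y :=
    fun y => (hQdsm.differentiable (by simp) y).hasDerivAt
  have hBoxp : ∀ x y : ℝ, Box p u x y = pd u x y * P y + (1/2) * deriv P y := by
    intro x y
    rw [hBox p u x y, hPfp x y, show (fun t => Pf p u x t) = P from funext fun t => hPfp x t]
    rfl
  have hBoxq : ∀ x y : ℝ, Box q u x y = pd u x y * Q y + (1/2) * deriv Q y := by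
    intro x y
    rw [hBox q u x y, hPfq x y, show (fun t => Pf q u x t) = Q from funext fun t => hPfq x t]
    rfl
  -- x-derivative of Box p u
  have hxBox : ∀ x y : ℝ, deriv (fun s => Box p u s y) x =
      Real.exp (2 * u x y) * Real.sqrt (1 + 4 * ε ^ 2 * (xd u x y) ^ 2) * P y := by
    intro x y
    have hfun : (fun s => Box p u s y) = fun s => pd u s y * P y + (1/2) * deriv P y :=
      funext fun s => hBoxp s y
    rw [hfun]
    have h := ((hasDerivAt_xd hpdu x y).mul_const (P y)).add_const ((1/2) * deriv P y)
    rw [h.deriv, clairaut_s15 hu x y, hsol' x y]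
  constructor
  · -- Part (1)
    intro x y
    have e1 : deriv (fun s => u s y) x = xd u x y := rfl
    rw [e1]
    have hfun : (fun t => deriv (fun s => Box p u s t) x)
        = fun t => Real.exp (2 * u x t) * Real.sqrt (1 + 4 * ε ^ 2 * (xd u x t) ^ 2) * P t :=
      funext fun t => hxBox x t
    rw [hfun, hxBox x y, hBoxp x y]
    have hval : deriv
        (fun t => Real.exp (2 * u x t) * Real.sqrt (1 + 4 * ε ^ 2 * (xd u x t) ^ 2) * P t) y
        = (2 * pd u x y * (Real.exp (2 * u x y) * Real.sqrt (1 + 4 * ε ^ 2 * (xd u x y) ^ 2))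
            + 4 * ε ^ 2 * xd u x y * Real.exp (4 * u x y)) * P y
          + Real.exp (2 * u x y) * Real.sqrt (1 + 4 * ε ^ 2 * (xd u x y) ^ 2) * deriv P y := by
      exact HasDerivAt.deriv (by exact (hAderiv x y).mul (hPder y))
    rw [hval, hee x y]
    have hS := (hsqpos x y).ne'
    field_simp
    ring
  · -- Part (2)
    intro x y
    obtain ⟨φ, hφdef⟩ : ∃ f : ℝ → ℝ → ℝ,
        f = fun a b => pd u a b * P b + (1/2) * deriv P b := ⟨_, rfl⟩
    obtain ⟨ψ, hψdef⟩ : ∃ f : ℝ → ℝ → ℝ,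
        f = fun a b => pd u a b * Q b + (1/2) * deriv Q b := ⟨_, rfl⟩
    have hφBox : Box p u = φ := by
      funext a b; rw [hφdef]; exact hBoxp a b
    have hψBox : Box q u = ψ := by
      funext a b; rw [hψdef]; exact hBoxq a b
    have hφsm : ContDiff ℝ (⊤ : ℕ∞) (uncurry φ) := by
      have h : uncurry φ = fun z : ℝ × ℝ => pd u z.1 z.2 * P z.2 + (1/2) * deriv P z.2 := by
        rw [hφdef]; rfl
      rw [h]
      exact (hpdu.mul (hPsm.comp contDiff_snd)).add
        (contDiff_const.mul (hPdsm.comp contDiff_snd))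
    have hψsm : ContDiff ℝ (⊤ : ℕ∞) (uncurry ψ) := by
      have h : uncurry ψ = fun z : ℝ × ℝ => pd u z.1 z.2 * Q z.2 + (1/2) * deriv Q z.2 := by
        rw [hψdef]; rfl
      rw [h]
      exact (hpdu.mul (hQsm.comp contDiff_snd)).add
        (contDiff_const.mul (hQdsm.comp contDiff_snd))
    have hφd : ∀ b : ℝ, pd φ x b =
        pd (pd u) x b * P b + pd u x b * deriv P b + (1/2) * deriv (deriv P) b := by
      intro b
      have hfx : φ x = fun t => pd u x t * P t + (1/2) * deriv P t := by rw [hφdef]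
      show deriv (φ x) b = _
      rw [hfx]
      exact (((hasDerivAt_pd hpdu x b).mul (hPder b)).add ((hPdder b).const_mul (1/2))).deriv
    have hψd : ∀ b : ℝ, pd ψ x b =
        pd (pd u) x b * Q b + pd u x b * deriv Q b + (1/2) * deriv (deriv Q) b := by
      intro b
      have hfx : ψ x = fun t => pd u x t * Q t + (1/2) * deriv Q t := by rw [hψdef]
      show deriv (ψ x) b = _
      rw [hfx]
      exact (((hasDerivAt_pd hpdu x b).mul (hQder b)).add ((hQdder b).const_mul (1/2))).deriv
    -- the main computation of the Gateaux derivative of Pf r and Box r in direction d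
    have key : ∀ (D : (ℝ → ℝ → ℝ) → ℝ → ℝ → ℝ) (d : ℝ → ℝ → ℝ), D u = d →
        ContDiff ℝ (⊤ : ℕ∞) (uncurry d) →
        ∀ (r : ℝ → (Fin N → ℝ) → ℝ), ContDiff ℝ (⊤ : ℕ∞) (uncurry r) →
        ∃ Er : ℝ → ℝ, ContDiff ℝ (⊤ : ℕ∞) Er ∧
          (∀ b : ℝ, Ev D (Pf r) u x b = Er b) ∧
          (∀ b : ℝ, Ev D (Box r) u x b =
            pd d x b * Pf r u x b + pd u x b * Er b + (1/2) * deriv Er b) := by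
      intro D d hDu hdsm r hr
      obtain ⟨v, hvdef⟩ : ∃ f : (ℝ × ℝ) → ℝ → ℝ,
          f = fun e b => u e.2 b + e.1 * d e.2 b := ⟨_, rfl⟩
      have hvsm : ContDiff ℝ (⊤ : ℕ∞) (uncurry v) := by
        have h : uncurry v = fun z : (ℝ × ℝ) × ℝ =>
            u z.1.2 z.2 + z.1.1 * d z.1.2 z.2 := by rw [hvdef]; rfl
        rw [h]
        have h1 : ContDiff ℝ (⊤ : ℕ∞) (fun z : (ℝ × ℝ) × ℝ => u z.1.2 z.2) :=
          hu.comp ((contDiff_snd.comp contDiff_fst).prodMk contDiff_snd)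
        have h2 : ContDiff ℝ (⊤ : ℕ∞) (fun z : (ℝ × ℝ) × ℝ => d z.1.2 z.2) :=
          hdsm.comp ((contDiff_snd.comp contDiff_fst).prodMk contDiff_snd)
        exact h1.add ((contDiff_fst.comp contDiff_fst).mul h2)
      have hpert : ∀ s : ℝ, (fun a b => u a b + s * d a b) = fun a b => v (s, a) b := by
        intro s; funext a b; rw [hvdef]
      obtain ⟨GG, hGGdef⟩ : ∃ f : (ℝ × ℝ) → ℝ → ℝ,
          f = fun e b => pd (pd v) e b - (pd v e b) ^ 2 - ε ^ 2 * Real.exp (4 * v e b) :=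
        ⟨_, rfl⟩
      have hGGsm : ContDiff ℝ (⊤ : ℕ∞) (uncurry GG) := by
        have h : uncurry GG = fun z : (ℝ × ℝ) × ℝ =>
            pd (pd v) z.1 z.2 - (pd v z.1 z.2) ^ 2 - ε ^ 2 * Real.exp (4 * v z.1 z.2) := by
          rw [hGGdef]; rfl
        rw [h]
        exact ((contDiff_pd_s15 (contDiff_pd_s15 hvsm)).sub ((contDiff_pd_s15 hvsm).pow 2)).sub
          (contDiff_const.mul (Real.contDiff_exp.comp (contDiff_const.mul hvsm)))
      have hWbv : ∀ s x' y' : ℝ, Wb (fun a b => v (s, a) b) x' y' = GG (s, x') y' := by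
        intro s x' y'
        rw [hWb _ x' y']
        rw [iteratedDeriv_two_pd v (s, x') y', hGGdef]
        rfl
      obtain ⟨H, hHdef⟩ : ∃ f : (ℝ × ℝ) → ℝ → ℝ,
          f = fun e b => r b (fun n : Fin N => iteratedDeriv (n : ℕ) (GG e) b) := ⟨_, rfl⟩
      have hHsm : ContDiff ℝ (⊤ : ℕ∞) (uncurry H) := by
        rw [hHdef]; exact contDiff_jetcomp hr hGGsm
      have hPfrv : ∀ s x' y' : ℝ, Pf r (fun a b => v (s, a) b) x' y' = H (s, x') y' := by
        intro s x' y'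
        rw [hPf r _ x' y', hHdef,
          show (fun t => Wb (fun a b => v (s, a) b) x' t) = GG (s, x') from
            funext fun t => hWbv s x' t]
      have hBoxrv : ∀ s x' y' : ℝ, Box r (fun a b => v (s, a) b) x' y'
          = pd v (s, x') y' * H (s, x') y' + (1/2) * pd H (s, x') y' := by
        intro s x' y'
        rw [hBox r _ x' y', hPfrv s x' y',
          show (fun t => Pf r (fun a b => v (s, a) b) x' t) = H (s, x') from
            funext fun t => hPfrv s x' t]
        rfl
      obtain ⟨Hx, hHxdef⟩ : ∃ f : ℝ → ℝ → ℝ, f = fun s b => H (s, x) b := ⟨_, rfl⟩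
      have hHxsm : ContDiff ℝ (⊤ : ℕ∞) (uncurry Hx) := by
        have h : uncurry Hx = uncurry H ∘ (fun z : ℝ × ℝ => ((z.1, x), z.2)) := by
          rw [hHxdef]; rfl
        rw [h]
        exact hHsm.comp ((contDiff_fst.prodMk contDiff_const).prodMk contDiff_snd)
      obtain ⟨Vx, hVxdef⟩ : ∃ f : ℝ → ℝ → ℝ, f = fun s b => v (s, x) b := ⟨_, rfl⟩
      have hVxsm : ContDiff ℝ (⊤ : ℕ∞) (uncurry Vx) := by
        have h : uncurry Vx = uncurry v ∘ (fun z : ℝ × ℝ => ((z.1, x), z.2)) := by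
          rw [hVxdef]; rfl
        rw [h]
        exact hvsm.comp ((contDiff_fst.prodMk contDiff_const).prodMk contDiff_snd)
      obtain ⟨Er, hErdef⟩ : ∃ f : ℝ → ℝ, f = fun b => xd Hx 0 b := ⟨_, rfl⟩
      have hErb : ∀ b : ℝ, Er b = xd Hx 0 b := by intro b; rw [hErdef]
      have hErsm : ContDiff ℝ (⊤ : ℕ∞) Er := by
        rw [hErdef]
        exact contDiff_section (contDiff_xd hHxsm) 0
      -- base-point identities
      have hv0 : ∀ x' : ℝ, v (0, x') = u x' := by
        intro x'; funext b; rw [hvdef]; simp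
      have hpdv0 : ∀ x' : ℝ, pd v (0, x') = pd u x' := by
        intro x'; funext b
        show deriv (v (0, x')) b = deriv (u x') b
        rw [hv0 x']
      have hGG0 : ∀ x' : ℝ, GG (0, x') = fun t => Wb u x' t := by
        intro x'; funext b
        rw [hGGdef]
        show pd (pd v) (0, x') b - (pd v (0, x') b) ^ 2 - ε ^ 2 * Real.exp (4 * v (0, x') b)
          = Wb u x' b
        have h1 : pd (pd v) (0, x') b = pd (pd u) x' b := by
          show deriv ((pd v) (0, x')) b = deriv ((pd u) x') b
          rw [hpdv0 x']
        rw [hWbu x' b, hGdef, h1, hpdv0 x', hv0 x']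
      have hH0 : ∀ b : ℝ, H (0, x) b = Pf r u x b := by
        intro b
        have h1 : H (0, x) b = r b (fun n : Fin N => iteratedDeriv (n : ℕ) (GG (0, x)) b) := by
          rw [hHdef]
        rw [h1, hGG0 x, hPf r u x b]
      -- the Gateaux derivative of Pf r
      have hEvPf : ∀ b : ℝ, Ev D (Pf r) u x b = Er b := by
        intro b
        rw [hEv D (Pf r) u x b, hDu]
        simp only [hpert, hPfrv]
        rw [hErb b, hHxdef]
        rfl
      -- the three s-derivatives
      have hxdVx : ∀ s t : ℝ, xd Vx s t = d x t := by
        intro s t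
        have hfun : (fun s' => Vx s' t) = fun s' => u x t + s' * d x t := by
          funext s'; rw [hVxdef, hvdef]
        show deriv (fun s' => Vx s' t) s = d x t
        rw [hfun]
        have h : HasDerivAt (fun s' => u x t + s' * d x t) (d x t) s := by
          simpa using ((hasDerivAt_id s).mul_const (d x t)).const_add (u x t)
        rw [h.deriv]
      have hT1 : ∀ b : ℝ, HasDerivAt (fun s => pd v (s, x) b) (pd d x b) 0 := by
        intro b
        have h0 : HasDerivAt (fun s => pd Vx s b) (xd (pd Vx) 0 b) 0 :=
          hasDerivAt_xd (contDiff_pd_s15 hVxsm) 0 b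
        have hfun : (fun s => pd Vx s b) = fun s => pd v (s, x) b := by
          funext s
          show deriv (Vx s) b = deriv (v (s, x)) b
          rw [hVxdef]
        have hval : xd (pd Vx) 0 b = pd d x b := by
          rw [clairaut_s15 hVxsm 0 b]
          show deriv (fun t => xd Vx 0 t) b = _
          rw [show (fun t => xd Vx 0 t) = fun t => d x t from funext fun t => hxdVx 0 t]
          rfl
        rw [hfun, hval] at h0
        exact h0
      have hT2 : ∀ b : ℝ, HasDerivAt (fun s => H (s, x) b) (Er b) 0 := by
        intro b
        have h0 : HasDerivAt (fun s => Hx s b) (xd Hx 0 b) 0 := hasDerivAt_xd hHxsm 0 b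
        have hfun : (fun s => Hx s b) = fun s => H (s, x) b := by
          funext s; rw [hHxdef]
        rw [hfun, ← hErb b] at h0
        exact h0
      have hT3 : ∀ b : ℝ, HasDerivAt (fun s => pd H (s, x) b) (deriv Er b) 0 := by
        intro b
        have h0 : HasDerivAt (fun s => pd Hx s b) (xd (pd Hx) 0 b) 0 :=
          hasDerivAt_xd (contDiff_pd_s15 hHxsm) 0 b
        have hfun : (fun s => pd Hx s b) = fun s => pd H (s, x) b := by
          funext s
          show deriv (Hx s) b = deriv (H (s, x)) b
          rw [hHxdef]
        have hval : xd (pd Hx) 0 b = deriv Er b := by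
          rw [clairaut_s15 hHxsm 0 b, hErdef]
          rfl
        rw [hfun, hval] at h0
        exact h0
      -- the Gateaux derivative of Box r
      have hEvBox : ∀ b : ℝ, Ev D (Box r) u x b =
          pd d x b * Pf r u x b + pd u x b * Er b + (1/2) * deriv Er b := by
        intro b
        rw [hEv D (Box r) u x b, hDu]
        simp only [hpert, hBoxrv]
        have hprod : HasDerivAt
            (fun s => pd v (s, x) b * H (s, x) b + 1/2 * pd H (s, x) b)
            (pd d x b * H (0, x) b + pd v (0, x) b * Er b + 1/2 * deriv Er b) 0 := by
          exact ((hT1 b).mul (hT2 b)).add ((hT3 b).const_mul (1/2))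
        rw [hprod.deriv, hH0 b,
          show pd v (0, x) b = pd u x b from by rw [hpdv0 x]]
      exact ⟨Er, hErsm, hEvPf, hEvBox⟩
    obtain ⟨E1, hE1sm, hE1Pf, hE1Box⟩ := key (Box p) φ hφBox hφsm q hq
    obtain ⟨E2, hE2sm, hE2Pf, hE2Box⟩ := key (Box q) ψ hψBox hψsm p hp
    have hE1der : ∀ b : ℝ, HasDerivAt E1 (deriv E1 b) b :=
      fun b => (hE1sm.differentiable (by simp) b).hasDerivAt
    have hE2der : ∀ b : ℝ, HasDerivAt E2 (deriv E2 b) b :=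
      fun b => (hE2sm.differentiable (by simp) b).hasDerivAt
    beta_reduce
    rw [hE1Box y, hE2Box y]
    simp only [hPfp, hPfq, hE1Pf, hE2Pf]
    have hArg : HasDerivAt (fun t => deriv P t * Q t - P t * deriv Q t + E1 t - E2 t)
        (deriv (deriv P) y * Q y + deriv P y * deriv Q y
          - (deriv P y * deriv Q y + P y * deriv (deriv Q) y) + deriv E1 y - deriv E2 y) y := by
      exact ((((hPdder y).mul (hQder y)).sub ((hPder y).mul (hQdder y))).add
        (hE1der y)).sub (hE2der y)
    rw [hArg.deriv, hφd y, hψd y,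
      show deriv (fun t => u x t) y = pd u x y from rfl]
    ring
end
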